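/- Let λ, μ, ν ∈ ℕⁿ be weakly decreasing with |ν| = |λ| + |μ|, let f ∈ B(λ,μ,ν), let p be a complete turnpath in R_f, and let L be an f-flatspace. Then: (1) p can enter L only by crossing entrance edges of sides of L, and p can leave L only by crossing exit edges of sides of L; (2) inside L, p uses only turnvertices lying in border triangles of L, and p traverses the border of L in counterclockwise direction. -/

import Mathlib

/-!
Framework for hive flows on the honeycomb graph, following
Bürgisser–Ikenmeyer, "A max-flow algorithm for positivity of
Littlewood-Richardson coefficients".

Vertices of the triangular graph `Δ` with parameter `n` are the points
`x(m,i)` with `0 ≤ i ≤ m ≤ n` (`m` = row counted from the top, `i` =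
position in the row counted from the left).
-/

namespace LRFlows

/-- Edges of the triangular graph `Δ`:
* `dl m i` is the down-left slanted edge from `x(m,i)` to `x(m+1,i)`,
* `dr m i` is the down-right slanted edge from `x(m,i)` to `x(m+1,i+1)`,
* `hz m i` is the horizontal edge from `x(m,i)` to `x(m,i+1)`. -/
inductive EdgeK : Type
  | dl (m i : ℕ)
  | dr (m i : ℕ)
  | hz (m i : ℕ)
  deriving DecidableEq

namespace EdgeK

def valid (n : ℕ) : EdgeK → Prop
  | dl m i => i ≤ m ∧ m + 1 ≤ n
  | dr m i => i ≤ m ∧ m + 1 ≤ n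
  | hz m i => i + 1 ≤ m ∧ m ≤ n

end EdgeK

/-- Hive triangles: `up m i` is the upright triangle with vertices
`x(m,i), x(m+1,i), x(m+1,i+1)`; `down m i` is the downright triangle with
vertices `x(m,i), x(m,i+1), x(m+1,i+1)`. -/
inductive Tri : Type
  | up (m i : ℕ)
  | down (m i : ℕ)
  deriving DecidableEq

namespace Tri

def valid (n : ℕ) : Tri → Prop
  | up m i => i ≤ m ∧ m + 1 ≤ n
  | down m i => i + 1 ≤ m ∧ m + 1 ≤ n

/-- The three sides of a hive triangle, listed in clockwise order. -/
def sides : Tri → List EdgeK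
  | up m i => [.dr m i, .hz (m+1) i, .dl m i]
  | down m i => [.hz m i, .dl m (i+1), .dr m i]

end Tri

/-- `e` is a side of the hive triangle `T`. -/
def sideOf (e : EdgeK) (T : Tri) : Prop := e ∈ T.sides

/-- The side following a given side of a hive triangle in clockwise order
around the triangle. -/
def cwNext : Tri → EdgeK → EdgeK
  | .up m i, e =>
      if e = .dr m i then .hz (m+1) i else if e = .hz (m+1) i then .dl m i else .dr m i
  | .down m i, e =>
      if e = .hz m i then .dl m (i+1) else if e = .dl m (i+1) then .dr m i else .hz m i

/-- The edges on the right border of `Δ`. -/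
def onRight (n : ℕ) (e : EdgeK) : Prop := ∃ m, m + 1 ≤ n ∧ e = .dr m m
/-- The edges on the bottom border of `Δ`. -/
def onBottom (n : ℕ) (e : EdgeK) : Prop := ∃ i, i + 1 ≤ n ∧ e = .hz n i
/-- The edges on the left border of `Δ`. -/
def onLeft (n : ℕ) (e : EdgeK) : Prop := ∃ m, m + 1 ≤ n ∧ e = .dl m 0

/-- The unique upright hive triangle having `e` as a side. -/
def upOf : EdgeK → Tri
  | .dl m i => .up m i
  | .dr m i => .up m i
  | .hz m i => .up (m - 1) i

/-- The downright hive triangle having `e` as a side, if any. -/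
def dnOf? : EdgeK → Option Tri
  | .dl m i => if i = 0 then none else some (.down m (i - 1))
  | .dr m i => some (.down m i)
  | .hz m i => some (.down m i)

/-- A flow class on the honeycomb graph `G`, recorded by its throughput
function `E(Δ) → ℝ`:  `thru k` is the net flow through the white vertex on
the edge `k` into the adjacent upright hive triangle. -/
structure Flow : Type where
  dl : ℕ → ℕ → ℝ
  dr : ℕ → ℕ → ℝ
  hz : ℕ → ℕ → ℝ

namespace Flow

def thru (f : Flow) : EdgeK → ℝ
  | .dl m i => f.dl m i
  | .dr m i => f.dr m i
  | .hz m i => f.hz m i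

end Flow

noncomputable instance : Add Flow :=
  ⟨fun f g => ⟨fun m i => f.dl m i + g.dl m i, fun m i => f.dr m i + g.dr m i,
    fun m i => f.hz m i + g.hz m i⟩⟩

noncomputable instance : SMul ℝ Flow :=
  ⟨fun c f => ⟨fun m i => c * f.dl m i, fun m i => c * f.dr m i, fun m i => c * f.hz m i⟩⟩

/-- A flow class is recorded by its values on the (valid) edges of `Δ` only;
we normalize all other values to `0`, so that flow classes correspond
bijectively to normalized `Flow`s. -/
def Normalized (n : ℕ) (f : Flow) : Prop :=
  (∀ m i, ¬ (EdgeK.dl m i).valid n → f.dl m i = 0) ∧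
  (∀ m i, ¬ (EdgeK.dr m i).valid n → f.dr m i = 0) ∧
  (∀ m i, ¬ (EdgeK.hz m i).valid n → f.hz m i = 0)

/-- Kirchhoff's conservation laws, in throughput form: the throughputs of the
three sides of every hive triangle (measured into the respective upright
triangle) sum to zero. -/
def IsFlow (n : ℕ) (f : Flow) : Prop :=
  (∀ m i, i ≤ m → m + 1 ≤ n → f.dl m i + f.dr m i + f.hz (m + 1) i = 0) ∧
  (∀ m i, i + 1 ≤ m → m + 1 ≤ n → f.hz m i + f.dl m (i + 1) + f.dr m i = 0)

/-- An integral flow class. -/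
def IntegralFlow (f : Flow) : Prop :=
  ∀ m i, (∃ z : ℤ, f.dl m i = (z : ℝ)) ∧ (∃ z : ℤ, f.dr m i = (z : ℝ)) ∧
    (∃ z : ℤ, f.hz m i = (z : ℝ))

/-- A `2^ℓ`-integral flow class. -/
def PowIntegral (l : ℕ) (f : Flow) : Prop :=
  ∀ m i, (∃ z : ℤ, f.dl m i = (z : ℝ) * 2 ^ l) ∧ (∃ z : ℤ, f.dr m i = (z : ℝ) * 2 ^ l) ∧
    (∃ z : ℤ, f.hz m i = (z : ℝ) * 2 ^ l)

/-- Rhombi (unions of an upright and a downright hive triangle sharing a side),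
indexed by the direction of their diagonal:
* `hzD m i` has horizontal diagonal `hz (m+1) i`, triangles `up m i` and `down (m+1) i`;
* `dlD m i` has diagonal `dl m (i+1)`, triangles `up m (i+1)` and `down m i`;
* `drD m i` has diagonal `dr m i`, triangles `up m i` and `down m i`. -/
inductive Rhombus : Type
  | hzD (m i : ℕ)
  | dlD (m i : ℕ)
  | drD (m i : ℕ)
  deriving DecidableEq

namespace Rhombus

def valid (n : ℕ) : Rhombus → Prop
  | hzD m i => i ≤ m ∧ m + 2 ≤ n
  | dlD m i => i + 1 ≤ m ∧ m + 1 ≤ n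
  | drD m i => i + 1 ≤ m ∧ m + 1 ≤ n

/-- The diagonal of a rhombus (joining its two obtuse vertices). -/
def diag : Rhombus → EdgeK
  | hzD m i => .hz (m+1) i
  | dlD m i => .dl m (i+1)
  | drD m i => .dr m i

/-- The upright hive triangle of a rhombus. -/
def triU : Rhombus → Tri
  | hzD m i => .up m i
  | dlD m i => .up m (i+1)
  | drD m i => .up m i

/-- The downright hive triangle of a rhombus. -/
def triD : Rhombus → Tri
  | hzD m i => .down (m+1) i
  | dlD m i => .down m i
  | drD m i => .down m i

end Rhombus

/-- The slack `σ(ρ,f)` of a rhombus `ρ` with respect to a flow class `f`: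
the sum of the values of the corresponding hive function at the two obtuse
vertices minus the sum at the two acute vertices, expressed through the
throughputs of the two sides of `ρ` parallel to one fixed direction. -/
noncomputable def slack (f : Flow) : Rhombus → ℝ
  | .hzD m i => f.dl (m+1) (i+1) - f.dl m i
  | .dlD m i => f.hz (m+1) (i+1) - f.hz m i
  | .drD m i => f.hz m i - f.hz (m+1) i

/-- A hive flow: a flow class all of whose rhombus slacks are nonnegative. -/
def IsHive (n : ℕ) (f : Flow) : Prop :=
  IsFlow n f ∧ ∀ ρ : Rhombus, ρ.valid n → 0 ≤ slack f ρ

/-- `∑_{i<n} lam i`, i.e. `|λ|` for `λ ∈ ℕⁿ`. -/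
def psum (n : ℕ) (lam : ℕ → ℕ) : ℕ := ∑ i ∈ Finset.range n, lam i

/-- `λ, μ, ν ∈ ℕⁿ` are weakly decreasing with `|ν| = |λ| + |μ|`. -/
def PartitionData (n : ℕ) (lam mu nu : ℕ → ℕ) : Prop :=
  (∀ i j, i ≤ j → j + 1 ≤ n → lam j ≤ lam i) ∧
  (∀ i j, i ≤ j → j + 1 ≤ n → mu j ≤ mu i) ∧
  (∀ i j, i ≤ j → j + 1 ≤ n → nu j ≤ nu i) ∧
  psum n nu = psum n lam + psum n mu

/-- Membership in the polytope `B(λ,μ,ν)` of bounded hive flows.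
The `i`-th right border edge from the top is `dr (i-1) (i-1)` with capacity
`λ_i = lam (i-1)`; the `i`-th bottom border edge from the right is
`hz n (n-i)` with capacity `μ_i`; the `i`-th left border edge from the top is
`dl (i-1) 0` with capacity `ν_i`. -/
def MemB (n : ℕ) (lam mu nu : ℕ → ℕ) (f : Flow) : Prop :=
  Normalized n f ∧ IsHive n f ∧
  (∀ m, m + 1 ≤ n → 0 ≤ f.dr m m ∧ f.dr m m ≤ (lam m : ℝ)) ∧
  (∀ i, i + 1 ≤ n → 0 ≤ f.hz n i ∧ f.hz n i ≤ (mu (n - 1 - i) : ℝ)) ∧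
  (∀ m, m + 1 ≤ n → 0 ≤ -(f.dl m 0) ∧ -(f.dl m 0) ≤ (nu m : ℝ))

/-- Membership in the polytope `P(λ,μ,ν)` of capacity achieving hive flows. -/
def MemP (n : ℕ) (lam mu nu : ℕ → ℕ) (f : Flow) : Prop :=
  Normalized n f ∧ IsHive n f ∧
  (∀ m, m + 1 ≤ n → f.dr m m = (lam m : ℝ)) ∧
  (∀ i, i + 1 ≤ n → f.hz n i = (mu (n - 1 - i) : ℝ)) ∧
  (∀ m, m + 1 ≤ n → -(f.dl m 0) = (nu m : ℝ))

/-- `B(λ,μ,ν)_ℤ`. -/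
def MemBZ (n : ℕ) (lam mu nu : ℕ → ℕ) (f : Flow) : Prop :=
  MemB n lam mu nu f ∧ IntegralFlow f

/-- `P(λ,μ,ν)_ℤ`. -/
def MemPZ (n : ℕ) (lam mu nu : ℕ → ℕ) (f : Flow) : Prop :=
  MemP n lam mu nu f ∧ IntegralFlow f

/-- The overall throughput `δ(f)`: the total throughput through the right and
bottom borders of `Δ`. -/
noncomputable def thr (n : ℕ) (f : Flow) : ℝ :=
  ∑ m ∈ Finset.range n, f.dr m m + ∑ i ∈ Finset.range n, f.hz n i

/-! ### The honeycomb graph `G` -/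

/-- Vertices of the honeycomb graph `G`: white vertices on the edges of `Δ`,
black vertices in the hive triangles, a source and a target. -/
inductive GVertex : Type
  | white (e : EdgeK)
  | black (T : Tri)
  | src
  | tgt
  deriving DecidableEq

/-- The adjacency of the directed honeycomb graph `G` (each undirected edge
appears as two opposite directed edges). -/
def GAdj (n : ℕ) (u v : GVertex) : Prop :=
  match u, v with
  | .white e, .black T => e.valid n ∧ T.valid n ∧ sideOf e T
  | .black T, .white e => e.valid n ∧ T.valid n ∧ sideOf e T
  | .src, .white e => e.valid n ∧ (onRight n e ∨ onBottom n e)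
  | .white e, .src => e.valid n ∧ (onRight n e ∨ onBottom n e)
  | .tgt, .white e => e.valid n ∧ onLeft n e
  | .white e, .tgt => e.valid n ∧ onLeft n e
  | _, _ => False

/-- The (cyclically) consecutive pairs of a list. -/
def cyclePairs (l : List GVertex) : List (GVertex × GVertex) := l.zip (l.rotate 1)

/-- A (directed) cycle in `G`, recorded as the list of its pairwise distinct
vertices. -/
def IsGCycle (n : ℕ) (l : List GVertex) : Prop :=
  l ≠ [] ∧ l.Nodup ∧ ∀ p ∈ cyclePairs l, GAdj n p.1 p.2

/-- A proper cycle uses neither the source nor the target. -/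
def ProperCycle (l : List GVertex) : Prop :=
  GVertex.src ∉ l ∧ GVertex.tgt ∉ l

/-- The throughput function of the integral flow class defined by a cycle in `G`. -/
def cycleDelta (l : List GVertex) (e : EdgeK) : ℝ :=
  (if (GVertex.white e, GVertex.black (upOf e)) ∈ cyclePairs l then (1 : ℝ) else 0) -
  (if (GVertex.black (upOf e), GVertex.white e) ∈ cyclePairs l then (1 : ℝ) else 0)

/-- The flow class `f + c` for a cycle `c` in `G`. -/
noncomputable def addCycle (f : Flow) (l : List GVertex) : Flow :=
  ⟨fun m i => f.dl m i + cycleDelta l (.dl m i),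
   fun m i => f.dr m i + cycleDelta l (.dr m i),
   fun m i => f.hz m i + cycleDelta l (.hz m i)⟩

/-- `f` and `g` are neighbours: `g - f` is a proper cycle in `G`. -/
def NeighbourFlow (n : ℕ) (f g : Flow) : Prop :=
  ∃ l : List GVertex, IsGCycle n l ∧ ProperCycle l ∧
    ∀ e : EdgeK, g.thru e - f.thru e = cycleDelta l e

/-- The support of (the reduced representative of) a flow class `d`, as a
relation on directed edges of `G`. -/
def suppEdge (n : ℕ) (d : Flow) (u v : GVertex) : Prop :=
  match u, v with
  | .white e, .black T =>
      e.valid n ∧ T.valid n ∧ ((T = upOf e ∧ 0 < d.thru e) ∨ (dnOf? e = some T ∧ d.thru e < 0))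
  | .black T, .white e =>
      e.valid n ∧ T.valid n ∧ ((T = upOf e ∧ d.thru e < 0) ∨ (dnOf? e = some T ∧ 0 < d.thru e))
  | .src, .white e => e.valid n ∧ (onRight n e ∨ onBottom n e) ∧ 0 < d.thru e
  | .white e, .src => e.valid n ∧ (onRight n e ∨ onBottom n e) ∧ d.thru e < 0
  | .tgt, .white e => e.valid n ∧ onLeft n e ∧ 0 < d.thru e
  | .white e, .tgt => e.valid n ∧ onLeft n e ∧ d.thru e < 0
  | _, _ => False

/-! ### Turns and slack contributions -/

/-- A turn: a path of length 2 in `G` inside `Δ`, entering a hive triangle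
through the white vertex on side `inE` and leaving it through the white vertex
on side `outE`. -/
structure Turn : Type where
  tri : Tri
  inE : EdgeK
  outE : EdgeK
  deriving DecidableEq

namespace Turn

def valid (n : ℕ) (t : Turn) : Prop :=
  t.tri.valid n ∧ sideOf t.inE t.tri ∧ sideOf t.outE t.tri ∧ t.inE ≠ t.outE

end Turn

/-- A turn is counterclockwise iff it goes to the clockwise-next side
(such a turn rotates counterclockwise around its pivot vertex). -/
def IsCCWTurn (t : Turn) : Prop := t.outE = cwNext t.tri t.inE

/-- A turn is clockwise iff it comes from the clockwise-next side of its exit. -/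
def IsCWTurn (t : Turn) : Prop := t.inE = cwNext t.tri t.outE

/-- The side of the triangle of a turn not used by the turn. -/
def thirdSide (t : Turn) : EdgeK :=
  if cwNext t.tri t.outE = t.inE then cwNext t.tri t.inE else cwNext t.tri t.outE

/-- A slack contribution of a rhombus: a single turn (at an acute angle) or a
concatenated pair of turns (around an obtuse angle). -/
inductive Contrib : Type
  | single (t : Turn)
  | double (t₁ t₂ : Turn)
  deriving DecidableEq

/-- The four negative slack contributions `Ψ₋(ρ)` of a rhombus: the two
counterclockwise turns at the acute angles, and the two clockwise length-4
paths around the obtuse angles. -/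
def negContrib (ρ : Rhombus) : Fin 4 → Contrib :=
  ![Contrib.single ⟨ρ.triU, cwNext ρ.triU ρ.diag, cwNext ρ.triU (cwNext ρ.triU ρ.diag)⟩,
    Contrib.single ⟨ρ.triD, cwNext ρ.triD ρ.diag, cwNext ρ.triD (cwNext ρ.triD ρ.diag)⟩,
    Contrib.double ⟨ρ.triU, cwNext ρ.triU ρ.diag, ρ.diag⟩
      ⟨ρ.triD, ρ.diag, cwNext ρ.triD (cwNext ρ.triD ρ.diag)⟩,
    Contrib.double ⟨ρ.triD, cwNext ρ.triD ρ.diag, ρ.diag⟩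
      ⟨ρ.triU, ρ.diag, cwNext ρ.triU (cwNext ρ.triU ρ.diag)⟩]

/-- The four positive slack contributions `Ψ₊(ρ)` of a rhombus: the two
clockwise turns at the acute angles, and the two counterclockwise length-4
paths around the obtuse angles. -/
def posContrib (ρ : Rhombus) : Fin 4 → Contrib :=
  ![Contrib.single ⟨ρ.triU, cwNext ρ.triU (cwNext ρ.triU ρ.diag), cwNext ρ.triU ρ.diag⟩,
    Contrib.single ⟨ρ.triD, cwNext ρ.triD (cwNext ρ.triD ρ.diag), cwNext ρ.triD ρ.diag⟩,
    Contrib.double ⟨ρ.triD, cwNext ρ.triD (cwNext ρ.triD ρ.diag), ρ.diag⟩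
      ⟨ρ.triU, ρ.diag, cwNext ρ.triU ρ.diag⟩,
    Contrib.double ⟨ρ.triU, cwNext ρ.triU (cwNext ρ.triU ρ.diag), ρ.diag⟩
      ⟨ρ.triD, ρ.diag, cwNext ρ.triD ρ.diag⟩]

/-- The antipodal contribution of the `j`-th negative slack contribution of a
rhombus: reverse it and rotate by 180°.  It is a positive contribution. -/
def antipodalContrib (ρ : Rhombus) : Fin 4 → Contrib :=
  ![posContrib ρ 1, posContrib ρ 0, posContrib ρ 3, posContrib ρ 2]

/-- The directed edges of `G` used by a turn. -/
def turnGEdges (t : Turn) : List (GVertex × GVertex) :=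
  [(GVertex.white t.inE, GVertex.black t.tri), (GVertex.black t.tri, GVertex.white t.outE)]

/-- The directed edges of `G` used by a slack contribution. -/
def Contrib.gedges : Contrib → List (GVertex × GVertex)
  | .single t => turnGEdges t
  | .double t₁ t₂ => turnGEdges t₁ ++ turnGEdges t₂

/-- The contribution `c` is contained in the support of the flow class `d`. -/
def ContribInSupp (n : ℕ) (d : Flow) (c : Contrib) : Prop :=
  ∀ p ∈ c.gedges, suppEdge n d p.1 p.2

/-- The contribution `c` is contained in (the edge set of) the cycle `l`. -/
def ContribInCycle (c : Contrib) (l : List GVertex) : Prop :=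
  ∀ p ∈ c.gedges, p ∈ cyclePairs l

/-- A cycle is `f`-hive preserving iff it uses no negative slack contribution
of an `f`-flat rhombus. -/
def CycleHivePreserving (n : ℕ) (f : Flow) (l : List GVertex) : Prop :=
  ∀ ρ : Rhombus, ρ.valid n → slack f ρ = 0 →
    ∀ j : Fin 4, ¬ ContribInCycle (negContrib ρ j) l

/-- A cycle is `f`-secure iff it is `f`-hive preserving and does not use both
counterclockwise turns at the acute angles of any nearly `f`-flat rhombus. -/
def CycleSecure (n : ℕ) (f : Flow) (l : List GVertex) : Prop :=
  CycleHivePreserving n f l ∧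
  ∀ ρ : Rhombus, ρ.valid n → slack f ρ = 1 →
    ¬ (ContribInCycle (negContrib ρ 0) l ∧ ContribInCycle (negContrib ρ 1) l)

/-! ### The digraph `R` and residual digraphs -/

/-- Vertices of the auxiliary digraph `R`: the turns, the source and the target. -/
inductive RVertex : Type
  | turn (t : Turn)
  | src
  | tgt
  deriving DecidableEq

/-- A turnedge: an ordered pair of turns whose concatenation is a path of
length 4 in `G`. -/
def TurnEdge (t₁ t₂ : Turn) : Prop :=
  t₁.outE = t₂.inE ∧ t₁.tri ≠ t₂.tri ∧ t₁.inE ≠ t₂.outE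

/-- Adjacency of the digraph `R`. -/
def RAdj (n : ℕ) (u v : RVertex) : Prop :=
  match u, v with
  | .turn t₁, .turn t₂ => t₁.valid n ∧ t₂.valid n ∧ TurnEdge t₁ t₂
  | .src, .turn t => t.valid n ∧ (onRight n t.inE ∨ onBottom n t.inE)
  | .turn t, .src => t.valid n ∧ (onRight n t.outE ∨ onBottom n t.outE)
  | .turn t, .tgt => t.valid n ∧ onLeft n t.outE
  | .tgt, .turn t => t.valid n ∧ onLeft n t.inE
  | _, _ => False

/-- A turnvertex deleted in `R_f`: a single-turn negative contribution of an
`f`-flat rhombus. -/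
def DelTurn (n : ℕ) (f : Flow) (t : Turn) : Prop :=
  ∃ ρ : Rhombus, ρ.valid n ∧ slack f ρ = 0 ∧ ∃ j : Fin 4, negContrib ρ j = Contrib.single t

/-- A turnedge deleted in `R_f`: a double negative contribution of an
`f`-flat rhombus. -/
def DelTurnEdge (n : ℕ) (f : Flow) (t₁ t₂ : Turn) : Prop :=
  ∃ ρ : Rhombus, ρ.valid n ∧ slack f ρ = 0 ∧ ∃ j : Fin 4, negContrib ρ j = Contrib.double t₁ t₂

/-- A right or bottom border edge saturated by `f`. -/
def SatRB (n : ℕ) (lam mu : ℕ → ℕ) (f : Flow) (e : EdgeK) : Prop :=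
  (∃ m, m + 1 ≤ n ∧ e = EdgeK.dr m m ∧ f.dr m m = (lam m : ℝ)) ∨
  (∃ i, i + 1 ≤ n ∧ e = EdgeK.hz n i ∧ f.hz n i = (mu (n - 1 - i) : ℝ))

/-- A left border edge saturated by `f`. -/
def SatL (n : ℕ) (nu : ℕ → ℕ) (f : Flow) (e : EdgeK) : Prop :=
  ∃ m, m + 1 ≤ n ∧ e = EdgeK.dl m 0 ∧ -(f.dl m 0) = (nu m : ℝ)

/-- Adjacency of the residual digraph `R_f`. -/
def ResidAdj (n : ℕ) (lam mu nu : ℕ → ℕ) (f : Flow) (u v : RVertex) : Prop :=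
  match u, v with
  | .turn t₁, .turn t₂ =>
      RAdj n (.turn t₁) (.turn t₂) ∧ ¬ DelTurn n f t₁ ∧ ¬ DelTurn n f t₂ ∧
        ¬ DelTurnEdge n f t₁ t₂
  | .src, .turn t => RAdj n .src (.turn t) ∧ ¬ DelTurn n f t ∧ ¬ SatRB n lam mu f t.inE
  | .turn t, .src => RAdj n (.turn t) .src ∧ ¬ DelTurn n f t ∧ ¬ SatRB n lam mu f t.outE
  | .turn t, .tgt => RAdj n (.turn t) .tgt ∧ ¬ DelTurn n f t ∧ ¬ SatL n nu f t.outE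
  | .tgt, .turn t => RAdj n .tgt (.turn t) ∧ ¬ DelTurn n f t ∧ ¬ SatL n nu f t.inE
  | _, _ => False

/-- A right or bottom border edge at which an additional unit of `2^ℓ` flow
does not fit. -/
def SatRB2 (n : ℕ) (lam mu : ℕ → ℕ) (f : Flow) (l : ℕ) (e : EdgeK) : Prop :=
  (∃ m, m + 1 ≤ n ∧ e = EdgeK.dr m m ∧ (lam m : ℝ) < f.dr m m + 2 ^ l) ∨
  (∃ i, i + 1 ≤ n ∧ e = EdgeK.hz n i ∧ (mu (n - 1 - i) : ℝ) < f.hz n i + 2 ^ l)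

/-- A left border edge at which an additional unit of `2^ℓ` flow does not fit. -/
def SatL2 (n : ℕ) (nu : ℕ → ℕ) (f : Flow) (l : ℕ) (e : EdgeK) : Prop :=
  ∃ m, m + 1 ≤ n ∧ e = EdgeK.dl m 0 ∧ (nu m : ℝ) < -(f.dl m 0) + 2 ^ l

/-- Adjacency of the residual digraph `R_f^(ℓ)`, obtained from `R_f` by
further deleting the turnedges crossing border edges without room for `2^ℓ`
additional flow. -/
def ResidAdjL (n : ℕ) (lam mu nu : ℕ → ℕ) (f : Flow) (l : ℕ) (u v : RVertex) : Prop :=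
  match u, v with
  | .src, .turn t => ResidAdj n lam mu nu f .src (.turn t) ∧ ¬ SatRB2 n lam mu f l t.inE
  | .turn t, .src => ResidAdj n lam mu nu f (.turn t) .src ∧ ¬ SatRB2 n lam mu f l t.outE
  | .turn t, .tgt => ResidAdj n lam mu nu f (.turn t) .tgt ∧ ¬ SatL2 n nu f l t.outE
  | .tgt, .turn t => ResidAdj n lam mu nu f .tgt (.turn t) ∧ ¬ SatL2 n nu f l t.inE
  | u, v => ResidAdj n lam mu nu f u v

/-- An `s`-`t`-turnpath for an adjacency relation `A` on `RVertex`. -/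
def IsSTPath (A : RVertex → RVertex → Prop) (l : List RVertex) : Prop :=
  l.Nodup ∧ l.Chain' A ∧ l.head? = some RVertex.src ∧ l.getLast? = some RVertex.tgt

/-- A `t`-`s`-turnpath. -/
def IsTSPath (A : RVertex → RVertex → Prop) (l : List RVertex) : Prop :=
  l.Nodup ∧ l.Chain' A ∧ l.head? = some RVertex.tgt ∧ l.getLast? = some RVertex.src

/-- A turncycle (which may pass through `s` or `t`). -/
def IsRCycle (A : RVertex → RVertex → Prop) (l : List RVertex) : Prop :=
  l ≠ [] ∧ l.Nodup ∧ l.Chain' A ∧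
    ∀ a b, l.getLast? = some a → l.head? = some b → A a b

/-- A complete turnpath: an `s`-`t`-turnpath, a `t`-`s`-turnpath, or a
turncycle. -/
def IsCompleteTP (A : RVertex → RVertex → Prop) (l : List RVertex) : Prop :=
  IsSTPath A l ∨ IsTSPath A l ∨ IsRCycle A l

/-- The throughput function of `π(p)` for a complete turnpath `p`
(vertex-distinct, so in/outflow at a turnvertex equals occurrence):
total flow into the two turnvertices pointing from the white vertex of the
edge into its upright triangle, minus the total flow out of the two
turnvertices pointing out of the triangle towards the edge. -/
def pathDelta (l : List RVertex) (e : EdgeK) : ℝ :=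
  (if RVertex.turn ⟨upOf e, e, cwNext (upOf e) e⟩ ∈ l then (1 : ℝ) else 0) +
  (if RVertex.turn ⟨upOf e, e, cwNext (upOf e) (cwNext (upOf e) e)⟩ ∈ l then (1 : ℝ) else 0) -
  (if RVertex.turn ⟨upOf e, cwNext (upOf e) e, e⟩ ∈ l then (1 : ℝ) else 0) -
  (if RVertex.turn ⟨upOf e, cwNext (upOf e) (cwNext (upOf e) e), e⟩ ∈ l then (1 : ℝ) else 0)

/-- The flow class `f + π(p)` for a turnpath `p`. -/
noncomputable def addPath (f : Flow) (l : List RVertex) : Flow :=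
  ⟨fun m i => f.dl m i + pathDelta l (.dl m i),
   fun m i => f.dr m i + pathDelta l (.dr m i),
   fun m i => f.hz m i + pathDelta l (.hz m i)⟩

/-! ### Flatspaces, sides, entrance and exit edges -/

/-- Two hive triangles are `f`-adjacent if they form an `f`-flat rhombus. -/
def FlatAdjTri (n : ℕ) (f : Flow) (T T' : Tri) : Prop :=
  ∃ ρ : Rhombus, ρ.valid n ∧ slack f ρ = 0 ∧
    ((T = ρ.triU ∧ T' = ρ.triD) ∨ (T = ρ.triD ∧ T' = ρ.triU))

/-- An `f`-flatspace: a connected component of the `f`-adjacency relation on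
hive triangles. -/
def IsFlatspace (n : ℕ) (f : Flow) (L : Set Tri) : Prop :=
  ∃ T : Tri, T.valid n ∧ L = {T' | Relation.ReflTransGen (FlatAdjTri n f) T T'}

/-- A valid triangle belonging to `L`. -/
def inL (n : ℕ) (L : Set Tri) (T : Tri) : Prop := T.valid n ∧ T ∈ L

/-- The downright triangle adjacent to `e` exists and belongs to `L`. -/
def dnIn (n : ℕ) (L : Set Tri) (e : EdgeK) : Prop :=
  ∃ T, dnOf? e = some T ∧ inL n L T

/-- A border edge of a set `L` of hive triangles: exactly one of its adjacent
hive triangles belongs to `L`. -/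
def BorderEdge (n : ℕ) (L : Set Tri) (e : EdgeK) : Prop :=
  e.valid n ∧ ((inL n L (upOf e) ∧ ¬ dnIn n L e) ∨ (dnIn n L e ∧ ¬ inL n L (upOf e)))

/-- The collinear successor of an edge of `Δ` along its line. -/
def lineSucc : EdgeK → EdgeK
  | .dl m i => .dl (m+1) i
  | .dr m i => .dr (m+1) (i+1)
  | .hz m i => .hz m (i+1)

/-- A side of `L`: a maximal run of consecutive collinear border edges of `L`. -/
def IsSide (n : ℕ) (L : Set Tri) (s : List EdgeK) : Prop :=
  s ≠ [] ∧ (∀ e ∈ s, BorderEdge n L e) ∧ s.Chain' (fun a b => b = lineSucc a) ∧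
  (∀ e a, s.head? = some a → lineSucc e = a → ¬ BorderEdge n L e) ∧
  (∀ a, s.getLast? = some a → ¬ BorderEdge n L (lineSucc a))

/-- The list recording a side of `L` (in `lineSucc` order) runs clockwise
around `L` (i.e. with the interior of `L` on its right). -/
def sideCW (n : ℕ) (L : Set Tri) (s : List EdgeK) : Prop :=
  ∃ e, s.head? = some e ∧
    (match e with
     | EdgeK.dr _ _ => inL n L (upOf e)
     | _ => dnIn n L e)

/-- `e` is the entrance edge of the side `s` of `L` (the first edge of the
side in clockwise order around `L`). -/
def entranceOf (n : ℕ) (L : Set Tri) (s : List EdgeK) (e : EdgeK) : Prop :=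
  (sideCW n L s ∧ s.head? = some e) ∨ (¬ sideCW n L s ∧ s.getLast? = some e)

/-- `e` is the exit edge of the side `s` of `L` (the last edge of the side in
clockwise order around `L`). -/
def exitOf (n : ℕ) (L : Set Tri) (s : List EdgeK) (e : EdgeK) : Prop :=
  (sideCW n L s ∧ s.getLast? = some e) ∨ (¬ sideCW n L s ∧ s.head? = some e)

open Classical in
/-- The throughput `δ(L,e,d)` of a flow class `d` into `L` through a border
edge `e` of `L`. -/
noncomputable def inflowEdge (n : ℕ) (L : Set Tri) (d : Flow) (e : EdgeK) : ℝ :=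
  if inL n L (upOf e) then d.thru e else -(d.thru e)

/-- `in(L,e,d)`. -/
noncomputable def inPosEdge (n : ℕ) (L : Set Tri) (d : Flow) (e : EdgeK) : ℝ :=
  max (inflowEdge n L d e) 0

/-- `out(L,e,d)`. -/
noncomputable def outPosEdge (n : ℕ) (L : Set Tri) (d : Flow) (e : EdgeK) : ℝ :=
  max (-(inflowEdge n L d e)) 0

/-- `in(L,a,d)`: the `L`-inflow of `d` through the side `a` (given as the list
of its edges). -/
noncomputable def inSide (n : ℕ) (L : Set Tri) (d : Flow) (s : List EdgeK) : ℝ :=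
  (s.map (inPosEdge n L d)).sum

/-- `out(L,a,d)`. -/
noncomputable def outSide (n : ℕ) (L : Set Tri) (d : Flow) (s : List EdgeK) : ℝ :=
  (s.map (outPosEdge n L d)).sum

/-- `v = (m,i)` is a vertex of the hive triangle `T`. -/
def vertexInTri (v : ℕ × ℕ) (T : Tri) : Prop :=
  match T with
  | .up m i => v = (m, i) ∨ v = (m+1, i) ∨ v = (m+1, i+1)
  | .down m i => v = (m, i) ∨ v = (m, i+1) ∨ v = (m+1, i+1)

/-- The six hive triangles around an interior vertex `x(m,i)`. -/
def sixAround (m i : ℕ) : List Tri :=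
  [.up m i, .down m i, .up (m-1) i, .down (m-1) (i-1), .up (m-1) (i-1), .down m (i-1)]

/-- The vertex `x(m,i)` is interior and all six hive triangles around it
belong to `L`. -/
def SurroundedVertex (n : ℕ) (L : Set Tri) (m i : ℕ) : Prop :=
  1 ≤ i ∧ i + 1 ≤ m ∧ m + 1 ≤ n ∧ ∀ T ∈ sixAround m i, T ∈ L

/-- An inner triangle of `L`: all of its vertices are surrounded by triangles
of `L`.  Triangles of `L` that are not inner are the border triangles. -/
def InnerTri (n : ℕ) (L : Set Tri) (T : Tri) : Prop :=
  ∀ m i, vertexInTri (m, i) T → SurroundedVertex n L m i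

/-- The hive triangle adjacent to `thirdSide t` on the other side of the
triangle of `t` belongs to `L`.  (For a counterclockwise turn this is the
rhombus through whose acute angle the turn passes.) -/
def acrossInL (n : ℕ) (L : Set Tri) (t : Turn) : Prop :=
  (upOf (thirdSide t) ≠ t.tri ∧ inL n L (upOf (thirdSide t))) ∨
  (∃ T', dnOf? (thirdSide t) = some T' ∧ T' ≠ t.tri ∧ inL n L T')

/-! ### Weighted families of complete turnpaths -/

/-- A weighted family of complete turnpaths for the adjacency `A`: a
nonnegative weight on lists of `R`-vertices supported on complete turnpaths. -/
def WeightedFamily (A : RVertex → RVertex → Prop) (φ : List RVertex → ℝ) : Prop :=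
  (∀ l, 0 ≤ φ l) ∧ ∀ l, ¬ IsCompleteTP A l → φ l = 0

/-- The turnpath `l` enters `L` by crossing the entrance edge of the side `s`. -/
def EntersVia (n : ℕ) (L : Set Tri) (s : List EdgeK) (l : List RVertex) : Prop :=
  ∃ e, entranceOf n L s e ∧ ∃ t : Turn, RVertex.turn t ∈ l ∧ t.inE = e ∧ inL n L t.tri

/-- The turnpath `l` exits `L` by crossing the exit edge of the side `s`. -/
def ExitsVia (n : ℕ) (L : Set Tri) (s : List EdgeK) (l : List RVertex) : Prop :=
  ∃ e, exitOf n L s e ∧ ∃ t : Turn, RVertex.turn t ∈ l ∧ t.outE = e ∧ inL n L t.tri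

/-- The entrance weight `in(L,a,φ)`. -/
noncomputable def inWeight (n : ℕ) (L : Set Tri) (s : List EdgeK)
    (φ : List RVertex → ℝ) : ℝ :=
  ∑ᶠ l ∈ {l : List RVertex | EntersVia n L s l}, φ l

/-- The exit weight `out(L,a,φ)`. -/
noncomputable def outWeight (n : ℕ) (L : Set Tri) (s : List EdgeK)
    (φ : List RVertex → ℝ) : ℝ :=
  ∑ᶠ l ∈ {l : List RVertex | ExitsVia n L s l}, φ l

/-- A flow class `d` is `f`-hive preserving if `f + ε d ∈ B(λ,μ,ν)` for all
sufficiently small `ε > 0`. -/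
def HivePreserving (n : ℕ) (lam mu nu : ℕ → ℕ) (f d : Flow) : Prop :=
  ∃ ε₀ : ℝ, 0 < ε₀ ∧ ∀ ε : ℝ, 0 < ε → ε ≤ ε₀ → MemB n lam mu nu (f + ε • d)

/-- The throughput of `π(d')` through the edge `e`, for the nonnegative flow
`d' = ∑_p φ(p)·p` on `R_f` determined by a weighted family `φ`. -/
noncomputable def wDelta (φ : List RVertex → ℝ) (e : EdgeK) : ℝ :=
  ∑ᶠ l : List RVertex, φ l * pathDelta l e

/-- The overall throughput `δ(π(d'))` of the flow `d' = ∑_p φ(p)·p` on `R_f`. -/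
noncomputable def piThr (n : ℕ) (φ : List RVertex → ℝ) : ℝ :=
  ∑ m ∈ Finset.range n, wDelta φ (.dr m m) + ∑ i ∈ Finset.range n, wDelta φ (.hz n i)

/-! ### Distance between flow classes -/

/-- The `L₁`-distance between two flow classes: the sum over the edges of `Δ`
of the absolute differences of the throughputs. -/
noncomputable def distFlow (n : ℕ) (f g : Flow) : ℝ :=
  ∑ m ∈ Finset.range (n+1), ∑ i ∈ Finset.range (n+1),
    ((if i ≤ m ∧ m + 1 ≤ n then |g.dl m i - f.dl m i| else 0) +
     (if i ≤ m ∧ m + 1 ≤ n then |g.dr m i - f.dr m i| else 0) +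
     (if i + 1 ≤ m ∧ m ≤ n then |g.hz m i - f.hz m i| else 0))

/-! ### Hives as functions on the vertices of `Δ` -/

/-- A hive on `Δ`: a function on the vertices `x(m,i)` (`i ≤ m ≤ n`) with
`h(x₀) = 0` at the top vertex, such that for every rhombus the sum of the
values at the two obtuse vertices is at least the sum at the two acute
vertices. -/
def IsHiveFn (n : ℕ) (h : ℕ → ℕ → ℝ) : Prop :=
  h 0 0 = 0 ∧
  (∀ m i, i ≤ m → m + 2 ≤ n → h m i + h (m+2) (i+1) ≤ h (m+1) i + h (m+1) (i+1)) ∧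
  (∀ m i, i + 1 ≤ m → m + 1 ≤ n → h m i + h (m+1) (i+2) ≤ h m (i+1) + h (m+1) (i+1)) ∧
  (∀ m i, i + 1 ≤ m → m + 1 ≤ n → h (m+1) i + h m (i+1) ≤ h m i + h (m+1) (i+1))

/-- A vertex of `Δ` lying on the boundary of the big triangle. -/
def BdryVtx (n : ℕ) (m i : ℕ) : Prop :=
  i ≤ m ∧ m ≤ n ∧ (i = 0 ∨ i = m ∨ m = n)

/-! ### Convex sets and canonical turnpaths -/

/-- Planar coordinates of the vertex `x(m,i)` (up to an affine change of
coordinates, which does not affect convexity). -/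
def vtxPoint (m i : ℕ) : ℝ × ℝ := (2 * (i : ℝ) - (m : ℝ), -(m : ℝ))

/-- The closed triangle in the plane corresponding to a hive triangle. -/
def triHull (T : Tri) : Set (ℝ × ℝ) :=
  match T with
  | .up m i => convexHull ℝ {vtxPoint m i, vtxPoint (m+1) i, vtxPoint (m+1) (i+1)}
  | .down m i => convexHull ℝ {vtxPoint m i, vtxPoint m (i+1), vtxPoint (m+1) (i+1)}

/-- A convex set in the triangular graph `Δ`: a nonempty union of (valid) hive
triangles that is convex as a subset of the plane. -/
def IsConvexSet (n : ℕ) (L : Set Tri) : Prop :=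
  L.Nonempty ∧ (∀ T ∈ L, T.valid n) ∧ Convex ℝ (⋃ T ∈ L, triHull T)

/-- The edge `e` belongs to (a triangle of) `L`. -/
def edgeInL (L : Set Tri) (e : EdgeK) : Prop := ∃ T ∈ L, sideOf e T

/-- A hive flow on the convex set `L`: a flow class on the subgraph `G_L`
(conservation holds at the black vertices of all triangles of `L`; values on
edges outside `L` vanish) whose slack is nonnegative on every rhombus
contained in `L`. -/
def HiveFlowOn (n : ℕ) (L : Set Tri) (d : Flow) : Prop :=
  (∀ m i, Tri.up m i ∈ L → d.dl m i + d.dr m i + d.hz (m+1) i = 0) ∧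
  (∀ m i, Tri.down m i ∈ L → d.hz m i + d.dl m (i+1) + d.dr m i = 0) ∧
  (∀ ρ : Rhombus, ρ.valid n → ρ.triU ∈ L → ρ.triD ∈ L → 0 ≤ slack d ρ) ∧
  (∀ e : EdgeK, ¬ edgeInL L e → d.thru e = 0)

/-- The two endpoints of an edge of `Δ`. -/
def edgeEnds : EdgeK → (ℕ × ℕ) × (ℕ × ℕ)
  | .dl m i => ((m, i), (m+1, i))
  | .dr m i => ((m, i), (m+1, i+1))
  | .hz m i => ((m, i), (m, i+1))

/-- `v` is an obtuse (120°) corner of `L`: exactly two triangles of `L`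
contain `v`. -/
def ObtuseCornerAt (n : ℕ) (L : Set Tri) (v : ℕ × ℕ) : Prop :=
  ∃ T₁ T₂ : Tri, T₁ ≠ T₂ ∧ inL n L T₁ ∧ inL n L T₂ ∧
    vertexInTri v T₁ ∧ vertexInTri v T₂ ∧
    ∀ T, inL n L T → vertexInTri v T → T = T₁ ∨ T = T₂

/-- Some endpoint of `e` is an obtuse corner of `L`. -/
def EndsAtObtuse (n : ℕ) (L : Set Tri) (e : EdgeK) : Prop :=
  ObtuseCornerAt n L (edgeEnds e).1 ∨ ObtuseCornerAt n L (edgeEnds e).2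

/-- A canonical turnpath of the convex set `L` (recorded by its list of
turns): either a single clockwise turn at an acute corner of `L`, or a
turnpath through the border triangles of `L`, starting at the entrance edge of
a side and ending at the exit edge of a side, traversing the border of `L`
counterclockwise (every counterclockwise turn closes off a rhombus leaving
`L`), never using two consecutive clockwise turns, and using two consecutive
counterclockwise turns only to go around an obtuse corner of `L`. -/
def CanonicalTP (n : ℕ) (L : Set Tri) (p : List Turn) : Prop :=
  (∃ t, p = [t] ∧ t.valid n ∧ t.tri ∈ L ∧ IsCWTurn t ∧
    BorderEdge n L t.inE ∧ BorderEdge n L t.outE) ∨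
  (2 ≤ p.length ∧
    (∀ t ∈ p, t.valid n ∧ inL n L t.tri ∧ ¬ InnerTri n L t.tri) ∧
    p.Chain' (fun t t' => TurnEdge t t' ∧ ¬ BorderEdge n L t.outE ∧
      ¬ (IsCWTurn t ∧ IsCWTurn t') ∧
      (IsCCWTurn t ∧ IsCCWTurn t' → EndsAtObtuse n L t.outE)) ∧
    (∀ t ∈ p, IsCCWTurn t → ¬ acrossInL n L t) ∧
    (∀ t, p.head? = some t → ∃ s, IsSide n L s ∧ entranceOf n L s t.inE) ∧
    (∀ t, p.getLast? = some t → ∃ s, IsSide n L s ∧ exitOf n L s t.outE))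

/-- A multiset of canonical turnpaths of `L`. -/
def MultisetCanonical (n : ℕ) (L : Set Tri) (φ : List Turn → ℕ) : Prop :=
  ∀ p, φ p ≠ 0 → CanonicalTP n L p

/-- `in(L,a,φ)`: the number, counted with multiplicity, of canonical
turnpaths of `φ` starting at the entrance edge of the side `a = s`. -/
noncomputable def inMs (n : ℕ) (L : Set Tri) (s : List EdgeK) (φ : List Turn → ℕ) : ℝ :=
  ∑ᶠ p ∈ {p : List Turn | ∃ t, p.head? = some t ∧ entranceOf n L s t.inE}, (φ p : ℝ)

/-- `out(L,a,φ)`: the number, counted with multiplicity, of canonical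
turnpaths of `φ` ending at the exit edge of the side `a = s`. -/
noncomputable def outMs (n : ℕ) (L : Set Tri) (s : List EdgeK) (φ : List Turn → ℕ) : ℝ :=
  ∑ᶠ p ∈ {p : List Turn | ∃ t, p.getLast? = some t ∧ exitOf n L s t.outE}, (φ p : ℝ)

end LRFlows

/-!
Inside a flatspace `L` every rhombus is flat, so `R_f` contains no counterclockwise turn closing
off a rhombus of `L` and no two consecutive clockwise turns in triangles of `L`.  Consequently, if
`p` enters a triangle of `L` and the next two triangles around the vertex where its entry edge
meets the following side also lie in `L`, then `p` cannot continue.  This applies at every vertex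
of an inner triangle.  It also applies where `p` enters through a border edge that is not an
entrance edge: the neighbouring edge of the side is a border edge with `L` on the same side, and
flatness fills in the triangle between.  Exits are the mirror image.
-/
namespace LRFlows

open EdgeK Tri

section Triangles

@[simp] lemma cwNext_up_dr (m i : ℕ) : cwNext (.up m i) (.dr m i) = .hz (m+1) i := by
  simp [cwNext]

@[simp] lemma cwNext_up_hz (m i : ℕ) : cwNext (.up m i) (.hz (m+1) i) = .dl m i := by
  simp [cwNext]

@[simp] lemma cwNext_up_dl (m i : ℕ) : cwNext (.up m i) (.dl m i) = .dr m i := by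
  simp [cwNext]

@[simp] lemma cwNext_down_hz (m i : ℕ) : cwNext (.down m i) (.hz m i) = .dl m (i+1) := by
  simp [cwNext]

@[simp] lemma cwNext_down_dl (m i : ℕ) : cwNext (.down m i) (.dl m (i+1)) = .dr m i := by
  simp [cwNext]

@[simp] lemma cwNext_down_dr (m i : ℕ) : cwNext (.down m i) (.dr m i) = .hz m i := by
  simp [cwNext]

lemma sideOf_up_iff {e : EdgeK} {m i : ℕ} :
    sideOf e (.up m i) ↔ e = .dr m i ∨ e = .hz (m+1) i ∨ e = .dl m i := by
  simp [sideOf, Tri.sides]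

lemma sideOf_down_iff {e : EdgeK} {m i : ℕ} :
    sideOf e (.down m i) ↔ e = .hz m i ∨ e = .dl m (i+1) ∨ e = .dr m i := by
  simp [sideOf, Tri.sides]

variable {n : ℕ} {e d : EdgeK} {T T' : Tri}

lemma cwNext_cwNext_cwNext (he : sideOf e T) : cwNext T (cwNext T (cwNext T e)) = e := by
  rcases T with ⟨m, i⟩ | ⟨m, i⟩
  · rcases sideOf_up_iff.mp he with rfl | rfl | rfl <;> simp
  · rcases sideOf_down_iff.mp he with rfl | rfl | rfl <;> simp

lemma sideOf_cwNext (he : sideOf e T) : sideOf (cwNext T e) T := by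
  rcases T with ⟨m, i⟩ | ⟨m, i⟩
  · rcases sideOf_up_iff.mp he with rfl | rfl | rfl <;> simp [sideOf_up_iff]
  · rcases sideOf_down_iff.mp he with rfl | rfl | rfl <;> simp [sideOf_down_iff]

lemma cwNext_ne (he : sideOf e T) : cwNext T e ≠ e := by
  rcases T with ⟨m, i⟩ | ⟨m, i⟩
  · rcases sideOf_up_iff.mp he with rfl | rfl | rfl <;> simp
  · rcases sideOf_down_iff.mp he with rfl | rfl | rfl <;> simp

lemma cwNext_cwNext_ne (he : sideOf e T) : cwNext T (cwNext T e) ≠ e := by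
  rcases T with ⟨m, i⟩ | ⟨m, i⟩
  · rcases sideOf_up_iff.mp he with rfl | rfl | rfl <;> simp
  · rcases sideOf_down_iff.mp he with rfl | rfl | rfl <;> simp

lemma sideOf_cases (h : sideOf e T) : T = upOf e ∨ dnOf? e = some T := by
  rcases T with ⟨m, i⟩ | ⟨m, i⟩
  · rcases sideOf_up_iff.mp h with rfl | rfl | rfl <;> simp [upOf]
  · rcases sideOf_down_iff.mp h with rfl | rfl | rfl <;> simp [dnOf?]

lemma sideOf_of_dnOf? (h : dnOf? e = some T) : sideOf e T := by
  rcases e with ⟨m, _ | i⟩ | ⟨m, i⟩ | ⟨m, i⟩ <;> simp [dnOf?] at h <;> subst h <;>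
    simp [sideOf_down_iff]

lemma sideOf_upOf (hT : T.valid n) (h : sideOf e T) : sideOf e (upOf e) := by
  rcases sideOf_cases h with rfl | h'
  · exact h
  rcases e with ⟨m, i⟩ | ⟨m, i⟩ | ⟨m, i⟩ <;> simp [upOf, sideOf_up_iff]
  obtain rfl := Option.some_injective _ h'.symm
  simp only [Tri.valid] at hT
  omega

lemma eq_of_sideOf_of_ne {T₁ T₂ T₃ : Tri} (h₁ : sideOf e T₁) (h₂ : sideOf e T₂)
    (h₃ : sideOf e T₃) (h₁₃ : T₁ ≠ T₃) (h₂₃ : T₂ ≠ T₃) : T₁ = T₂ := by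
  rcases sideOf_cases h₁ with rfl | e₁ <;> rcases sideOf_cases h₂ with rfl | e₂ <;>
    rcases sideOf_cases h₃ with rfl | e₃ <;> simp_all

lemma eq_of_sideOf_of_onBorder (hb : onRight n e ∨ onBottom n e ∨ onLeft n e)
    (h : sideOf e T) (h' : sideOf e T') (hT : T.valid n) (hT' : T'.valid n) : T = T' := by
  rcases hb with ⟨k, hk, rfl⟩ | ⟨k, hk, rfl⟩ | ⟨k, hk, rfl⟩ <;>
    rcases sideOf_cases h with rfl | e₁ <;> rcases sideOf_cases h' with rfl | e₂ <;>
    simp only [dnOf?, upOf, Option.some.injEq, if_true] at * <;> subst_vars <;>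
    simp_all [Tri.valid]

lemma exists_rhombus_of_sideOf_up_down {a b c k : ℕ} (hT' : (Tri.down c k).valid n)
    (h : sideOf d (.up a b)) (h' : sideOf d (.down c k)) :
    ∃ ρ : Rhombus, ρ.valid n ∧ ρ.diag = d ∧ ρ.triU = .up a b ∧ ρ.triD = .down c k := by
  simp only [Tri.valid] at hT'
  rcases sideOf_up_iff.mp h with rfl | rfl | rfl <;>
    rcases sideOf_down_iff.mp h' with h' | h' | h' <;>
    simp only [reduceCtorEq, dr.injEq, dl.injEq, hz.injEq] at h'
  · obtain ⟨rfl, rfl⟩ := h'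
    exact ⟨.drD a b, by simp [Rhombus.valid]; omega, rfl, rfl, rfl⟩
  · obtain ⟨rfl, rfl⟩ := h'
    exact ⟨.hzD a b, by simp [Rhombus.valid]; omega, rfl, rfl, rfl⟩
  · obtain ⟨rfl, rfl⟩ := h'
    exact ⟨.dlD a k, by simp [Rhombus.valid]; omega, rfl, rfl, rfl⟩

lemma exists_rhombus_of_sideOf (hT : T.valid n) (hT' : T'.valid n) (hne : T ≠ T')
    (h : sideOf d T) (h' : sideOf d T') :
    ∃ ρ : Rhombus, ρ.valid n ∧ ρ.diag = d ∧
      ((ρ.triU = T ∧ ρ.triD = T') ∨ (ρ.triU = T' ∧ ρ.triD = T)) := by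
  rcases T with ⟨a, b⟩ | ⟨a, b⟩ <;> rcases T' with ⟨c, k⟩ | ⟨c, k⟩
  · rcases sideOf_up_iff.mp h with rfl | rfl | rfl <;>
      rcases sideOf_up_iff.mp h' with h' | h' | h' <;> simp_all
  · obtain ⟨ρ, hv, hρ, hU, hD⟩ := exists_rhombus_of_sideOf_up_down hT' h h'
    exact ⟨ρ, hv, hρ, .inl ⟨hU, hD⟩⟩
  · obtain ⟨ρ, hv, hρ, hU, hD⟩ := exists_rhombus_of_sideOf_up_down hT h' h
    exact ⟨ρ, hv, hρ, .inr ⟨hU, hD⟩⟩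
  · rcases sideOf_down_iff.mp h with rfl | rfl | rfl <;>
      rcases sideOf_down_iff.mp h' with h' | h' | h' <;> simp_all

lemma mem_of_surroundedVertex {L : Set Tri} {m i : ℕ} (hs : SurroundedVertex n L m i)
    (hT : vertexInTri (m, i) T) : T ∈ L := by
  obtain ⟨hi, hm, -, hsix⟩ := hs
  apply hsix
  rcases T with ⟨a, b⟩ | ⟨a, b⟩ <;> simp only [vertexInTri, Prod.mk.injEq] at hT <;>
    simp only [sixAround, List.mem_cons, Tri.up.injEq, Tri.down.injEq, reduceCtorEq,
      List.not_mem_nil, false_or, or_false] <;> omega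

end Triangles

section Turns

variable {n : ℕ} {L : Set Tri} {t : Turn}

lemma isCCWTurn_or_isCWTurn (hv : t.valid n) : IsCCWTurn t ∨ IsCWTurn t := by
  obtain ⟨T, a, b⟩ := t
  obtain ⟨-, ha, hb, hab⟩ := hv
  rcases T with ⟨m, i⟩ | ⟨m, i⟩
  · rcases sideOf_up_iff.mp ha with rfl | rfl | rfl <;>
      rcases sideOf_up_iff.mp hb with rfl | rfl | rfl <;> simp_all [IsCCWTurn, IsCWTurn]
  · rcases sideOf_down_iff.mp ha with rfl | rfl | rfl <;>
      rcases sideOf_down_iff.mp hb with rfl | rfl | rfl <;> simp_all [IsCCWTurn, IsCWTurn]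

lemma IsCCWTurn.thirdSide_eq (h : IsCCWTurn t) (hin : sideOf t.inE t.tri) :
    thirdSide t = cwNext t.tri (cwNext t.tri t.inE) := by
  rw [thirdSide, h, if_neg (cwNext_cwNext_ne hin)]

lemma IsCWTurn.outE_eq (h : IsCWTurn t) (hout : sideOf t.outE t.tri) :
    t.outE = cwNext t.tri (cwNext t.tri t.inE) := by
  rw [h, cwNext_cwNext_cwNext hout]

lemma sideOf_thirdSide (hv : t.valid n) : sideOf (thirdSide t) t.tri := by
  unfold thirdSide
  split
  · exact sideOf_cwNext hv.2.1
  · exact sideOf_cwNext hv.2.2.1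

lemma exists_of_acrossInL (hv : t.valid n) (h : acrossInL n L t) :
    ∃ T', sideOf (thirdSide t) T' ∧ T' ≠ t.tri ∧ inL n L T' := by
  rcases h with ⟨hne, hT'⟩ | ⟨T', hT', hne, hmem⟩
  · exact ⟨_, sideOf_upOf hv.1 (sideOf_thirdSide hv), hne, hT'⟩
  · exact ⟨T', sideOf_of_dnOf? hT', hne, hmem⟩

lemma acrossInL_of_sideOf {T' : Tri} (h : sideOf (thirdSide t) T') (hne : T' ≠ t.tri)
    (hT' : inL n L T') : acrossInL n L t := by
  rcases sideOf_cases h with rfl | hd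
  · exact .inl ⟨hne, hT'⟩
  · exact .inr ⟨T', hd, hne, hT'⟩

end Turns

/-- All triangles of a flatspace have the same side throughputs; this is what makes every rhombus
inside a flatspace flat. -/
noncomputable def triThroughputs (f : Flow) : Tri → ℝ × ℝ × ℝ
  | .up m i => (f.dl m i, f.dr m i, f.hz (m+1) i)
  | .down m i => (f.dl m (i+1), f.dr m i, f.hz m i)

section Flatspace

variable {n : ℕ} {f : Flow} {L : Set Tri} {T T' : Tri} {ρ : Rhombus}

lemma Rhombus.valid_triU_triD (h : ρ.valid n) : ρ.triU.valid n ∧ ρ.triD.valid n := by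
  rcases ρ with ⟨m, i⟩ | ⟨m, i⟩ | ⟨m, i⟩ <;> simp only [Rhombus.valid] at h <;>
    simp only [Rhombus.triU, Rhombus.triD, Tri.valid] <;> omega

lemma triThroughputs_sum_eq_zero (hflow : IsFlow n f) (hT : T.valid n) :
    (triThroughputs f T).1 + (triThroughputs f T).2.1 + (triThroughputs f T).2.2 = 0 := by
  rcases T with ⟨m, i⟩ | ⟨m, i⟩ <;> simp only [triThroughputs, Tri.valid] at hT ⊢
  · exact hflow.1 m i hT.1 hT.2
  · linarith [hflow.2 m i hT.1 hT.2]

lemma triThroughputs_eq_of_flatAdjTri (hflow : IsFlow n f) (h : FlatAdjTri n f T T') :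
    triThroughputs f T = triThroughputs f T' := by
  obtain ⟨ρ, hv, hs, hρ⟩ := h
  have hU := triThroughputs_sum_eq_zero hflow (Rhombus.valid_triU_triD hv).1
  have hD := triThroughputs_sum_eq_zero hflow (Rhombus.valid_triU_triD hv).2
  have key : triThroughputs f ρ.triU = triThroughputs f ρ.triD := by
    rcases ρ with ⟨m, i⟩ | ⟨m, i⟩ | ⟨m, i⟩ <;>
      simp only [slack, triThroughputs, Rhombus.triU, Rhombus.triD, Prod.mk.injEq, and_true,
        true_and] at hs hU hD ⊢ <;>
      constructorm* _ ∧ _ <;> linarith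
  rcases hρ with ⟨rfl, rfl⟩ | ⟨rfl, rfl⟩
  exacts [key, key.symm]

namespace IsFlatspace

variable (hL : IsFlatspace n f L)
include hL

lemma valid (hT : T ∈ L) : T.valid n := by
  obtain ⟨T₀, hT₀, rfl⟩ := hL
  induction hT with
  | refl => exact hT₀
  | tail _ h _ =>
    obtain ⟨ρ, hv, -, ⟨-, rfl⟩ | ⟨-, rfl⟩⟩ := h
    exacts [(Rhombus.valid_triU_triD hv).2, (Rhombus.valid_triU_triD hv).1]

lemma inL_of_mem (hT : T ∈ L) : inL n L T := ⟨hL.valid hT, hT⟩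

lemma mem_of_flatAdjTri (hT : T ∈ L) (h : FlatAdjTri n f T T') : T' ∈ L := by
  obtain ⟨T₀, -, rfl⟩ := hL
  exact .tail hT h

lemma mem_triD (hv : ρ.valid n) (hs : slack f ρ = 0) (hU : ρ.triU ∈ L) : ρ.triD ∈ L :=
  hL.mem_of_flatAdjTri hU ⟨ρ, hv, hs, .inl ⟨rfl, rfl⟩⟩

lemma mem_triU (hv : ρ.valid n) (hs : slack f ρ = 0) (hD : ρ.triD ∈ L) : ρ.triU ∈ L :=
  hL.mem_of_flatAdjTri hD ⟨ρ, hv, hs, .inr ⟨rfl, rfl⟩⟩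

lemma triThroughputs_eq (hflow : IsFlow n f) (hT : T ∈ L) (hT' : T' ∈ L) :
    triThroughputs f T = triThroughputs f T' := by
  obtain ⟨T₀, -, rfl⟩ := hL
  have key : ∀ T, Relation.ReflTransGen (FlatAdjTri n f) T₀ T →
      triThroughputs f T₀ = triThroughputs f T := fun T h => by
    induction h with
    | refl => rfl
    | tail _ h ih => exact ih.trans (triThroughputs_eq_of_flatAdjTri hflow h)
  exact (key T hT).symm.trans (key T' hT')

lemma slack_eq_zero (hflow : IsFlow n f) (hU : ρ.triU ∈ L) (hD : ρ.triD ∈ L) :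
    slack f ρ = 0 := by
  have h := hL.triThroughputs_eq hflow hU hD
  rcases ρ with ⟨m, i⟩ | ⟨m, i⟩ | ⟨m, i⟩ <;>
    simp only [triThroughputs, Rhombus.triU, Rhombus.triD, Prod.mk.injEq] at h <;>
    simp only [slack] <;> linarith [h.1, h.2.1, h.2.2]

lemma mem_rhombus_of_slack_nonpos (hf : IsHive n f) (hv : ρ.valid n)
    (hmem : ρ.triU ∈ L ∨ ρ.triD ∈ L) (h : slack f ρ ≤ 0) : ρ.triU ∈ L ∧ ρ.triD ∈ L := by
  have hs : slack f ρ = 0 := le_antisymm h (hf.2 ρ hv)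
  rcases hmem with hU | hD
  exacts [⟨hU, hL.mem_triD hv hs hU⟩, ⟨hL.mem_triU hv hs hD, hD⟩]

/-- The slacks of the two rhombi that `T` forms with `T₁` and `T₂` add up to a difference of
equal throughputs of `T₁` and `T₂`. -/
lemma mem_of_between (hf : IsHive n f) {T₁ T T₂ : Tri} {d₁ d₂ : EdgeK} (hT₁ : T₁ ∈ L)
    (hT₂ : T₂ ∈ L) (hT : T.valid n) (h₁ : sideOf d₁ T₁) (h₁' : sideOf d₁ T)
    (h₂ : sideOf d₂ T₂) (h₂' : sideOf d₂ T) (hne₁ : T₁ ≠ T) (hne₂ : T₂ ≠ T) (hd : d₁ ≠ d₂) :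
    T ∈ L := by
  obtain ⟨ρ₁, hv₁, rfl, hρ₁⟩ := exists_rhombus_of_sideOf (hL.valid hT₁) hT hne₁ h₁ h₁'
  obtain ⟨ρ₂, hv₂, rfl, hρ₂⟩ := exists_rhombus_of_sideOf (hL.valid hT₂) hT hne₂ h₂ h₂'
  suffices hs : slack f ρ₁ + slack f ρ₂ = 0 by
    have hs₁ : slack f ρ₁ ≤ 0 := by linarith [hf.2 ρ₂ hv₂]
    rcases hρ₁ with ⟨hU, hD⟩ | ⟨hU, hD⟩
    · exact hD ▸ (hL.mem_rhombus_of_slack_nonpos hf hv₁ (.inl (hU ▸ hT₁)) hs₁).2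
    · exact hU ▸ (hL.mem_rhombus_of_slack_nonpos hf hv₁ (.inr (hD ▸ hT₁)) hs₁).1
  have c := triThroughputs_sum_eq_zero hf.1 hT
  have c₁ := triThroughputs_sum_eq_zero hf.1 (hL.valid hT₁)
  have c₂ := triThroughputs_sum_eq_zero hf.1 (hL.valid hT₂)
  have hg := hL.triThroughputs_eq hf.1 hT₁ hT₂
  rcases ρ₁ with ⟨a, b⟩ | ⟨a, b⟩ | ⟨a, b⟩ <;> rcases ρ₂ with ⟨c, d⟩ | ⟨c, d⟩ | ⟨c, d⟩ <;>
    simp only [Rhombus.triU, Rhombus.triD, Rhombus.diag] at hρ₁ hρ₂ hd <;>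
    rcases hρ₁ with ⟨rfl, rfl⟩ | ⟨rfl, rfl⟩ <;> rcases hρ₂ with ⟨rfl, h⟩ | ⟨h, rfl⟩ <;>
    simp only [Tri.up.injEq, Tri.down.injEq, reduceCtorEq, Nat.add_right_cancel_iff] at h <;>
    obtain ⟨h, h'⟩ := h <;> subst h h' <;>
    first
    | exact absurd rfl hd
    | simp only [triThroughputs, slack, Prod.mk.injEq] at hg c c₁ c₂ ⊢; linarith

end IsFlatspace

end Flatspace

section Turnpaths

lemma head?_eq_or_exists_rel_of_mem {α : Type*} {R : α → α → Prop} {l : List α} {x : α}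
    (hc : l.IsChain R) (hx : x ∈ l) : l.head? = some x ∨ ∃ y ∈ l, R y x := by
  induction l with
  | nil => simp at hx
  | cons a l ih =>
    rcases List.mem_cons.mp hx with rfl | hx
    · exact .inl rfl
    cases l with
    | nil => simp at hx
    | cons b l =>
      rw [List.isChain_cons_cons] at hc
      refine .inr ((ih hc.2 hx).elim (fun h => ?_) fun ⟨y, hy, h⟩ => ⟨y, .tail _ hy, h⟩)
      obtain rfl : b = x := by simpa using h
      exact ⟨a, .head _, hc.1⟩

lemma getLast?_eq_or_exists_rel_of_mem {α : Type*} {R : α → α → Prop} {l : List α} {x : α}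
    (hc : l.IsChain R) (hx : x ∈ l) : l.getLast? = some x ∨ ∃ y ∈ l, R x y := by
  simpa [List.head?_reverse] using
    head?_eq_or_exists_rel_of_mem (List.isChain_reverse.mpr hc) (List.mem_reverse.mpr hx)

variable {A : RVertex → RVertex → Prop} {p : List RVertex} {t : Turn}

lemma IsCompleteTP.exists_rel_to (hp : IsCompleteTP A p) (ht : .turn t ∈ p) :
    ∃ y, A y (.turn t) := by
  rcases hp with ⟨-, hc, hh, -⟩ | ⟨-, hc, hh, -⟩ | ⟨hne, -, hc, hcyc⟩ <;>
    refine (head?_eq_or_exists_rel_of_mem hc ht).elim (fun h => ?_) fun ⟨y, _, h⟩ => ⟨y, h⟩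
  · simp [hh] at h
  · simp [hh] at h
  · exact ⟨_, hcyc _ _ (List.getLast?_eq_some_getLast hne) h⟩

lemma IsCompleteTP.exists_rel_from (hp : IsCompleteTP A p) (ht : .turn t ∈ p) :
    ∃ y, A (.turn t) y := by
  rcases hp with ⟨-, hc, -, hl⟩ | ⟨-, hc, -, hl⟩ | ⟨hne, -, hc, hcyc⟩ <;>
    refine (getLast?_eq_or_exists_rel_of_mem hc ht).elim (fun h => ?_) fun ⟨y, _, h⟩ => ⟨y, h⟩
  · simp [hl] at h
  · simp [hl] at h
  · exact ⟨_, hcyc _ _ h (List.head?_eq_some_head hne)⟩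

variable {n : ℕ} {lam mu nu : ℕ → ℕ} {f : Flow}

lemma valid_and_not_delTurn_of_residAdj_to {y : RVertex}
    (h : ResidAdj n lam mu nu f y (.turn t)) : t.valid n ∧ ¬ DelTurn n f t := by
  rcases y with t₀ | _ | _
  exacts [⟨h.1.2.1, h.2.2.1⟩, ⟨h.1.1, h.2.1⟩, ⟨h.1.1, h.2.1⟩]

lemma valid_and_not_delTurn_of_residAdj_from {y : RVertex}
    (h : ResidAdj n lam mu nu f (.turn t) y) : t.valid n ∧ ¬ DelTurn n f t := by
  rcases y with t₁ | _ | _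
  exacts [⟨h.1.1, h.2.1⟩, ⟨h.1.1, h.2.1⟩, ⟨h.1.1, h.2.1⟩]

lemma IsCompleteTP.valid_and_not_delTurn (hp : IsCompleteTP (ResidAdj n lam mu nu f) p)
    (ht : .turn t ∈ p) : t.valid n ∧ ¬ DelTurn n f t :=
  valid_and_not_delTurn_of_residAdj_to (hp.exists_rel_to ht).choose_spec

/-- Only edges on the border of `Δ` lead to `s` or `t`, so a turnpath leaving a triangle through
any other edge continues into the triangle beyond it. -/
lemma IsCompleteTP.exists_next_turn (hp : IsCompleteTP (ResidAdj n lam mu nu f) p)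
    (ht : .turn t ∈ p) {T : Tri} (hs : sideOf t.outE T) (hne : T ≠ t.tri) (hT : T.valid n) :
    ∃ t', ResidAdj n lam mu nu f (.turn t) (.turn t') ∧ t'.tri = T ∧ t'.inE = t.outE := by
  obtain ⟨y, hy⟩ := hp.exists_rel_from ht
  have hv := (valid_and_not_delTurn_of_residAdj_from hy).1
  rcases y with t' | _ | _
  · obtain ⟨-, hv', hin, hne', -⟩ := hy.1
    exact ⟨t', hy, eq_of_sideOf_of_ne (hin ▸ hv'.2.1) hs hv.2.2.1 (Ne.symm hne') hne, hin.symm⟩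
  · exact (hne (eq_of_sideOf_of_onBorder (hy.1.2.imp_right .inl) hs hv.2.2.1 hT hv.1)).elim
  · exact (hne (eq_of_sideOf_of_onBorder (.inr (.inr hy.1.2)) hs hv.2.2.1 hT hv.1)).elim

lemma IsCompleteTP.exists_prev_turn (hp : IsCompleteTP (ResidAdj n lam mu nu f) p)
    (ht : .turn t ∈ p) {T : Tri} (hs : sideOf t.inE T) (hne : T ≠ t.tri) (hT : T.valid n) :
    ∃ t₀, ResidAdj n lam mu nu f (.turn t₀) (.turn t) ∧ t₀.tri = T ∧ t₀.outE = t.inE := by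
  obtain ⟨y, hy⟩ := hp.exists_rel_to ht
  have hv := (valid_and_not_delTurn_of_residAdj_to hy).1
  rcases y with t₀ | _ | _
  · obtain ⟨hv₀, -, hout, hne', -⟩ := hy.1
    exact ⟨t₀, hy, eq_of_sideOf_of_ne (hout ▸ hv₀.2.2.1) hs hv.2.1 hne' hne, hout⟩
  · exact (hne (eq_of_sideOf_of_onBorder (hy.1.2.imp_right .inl) hs hv.2.1 hT hv.1)).elim
  · exact (hne (eq_of_sideOf_of_onBorder (.inr (.inr hy.1.2)) hs hv.2.1 hT hv.1)).elim

end Turnpaths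

section Deletion

variable {n : ℕ} {f : Flow} {L : Set Tri} {t t' : Turn}

lemma IsCCWTurn.eq_mk (h : IsCCWTurn t) (hin : sideOf t.inE t.tri) :
    t = ⟨t.tri, cwNext t.tri (thirdSide t), cwNext t.tri (cwNext t.tri (thirdSide t))⟩ := by
  rw [h.thirdSide_eq hin, cwNext_cwNext_cwNext hin, ← h]

lemma delTurn_of_acrossInL (hflow : IsFlow n f) (hL : IsFlatspace n f L) (hv : t.valid n)
    (hT : t.tri ∈ L) (hccw : IsCCWTurn t) (h : acrossInL n L t) : DelTurn n f t := by
  obtain ⟨T', hs, hne, hT'⟩ := exists_of_acrossInL hv h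
  obtain ⟨ρ, hρ, hd, hUD⟩ :=
    exists_rhombus_of_sideOf hv.1 hT'.1 hne.symm (sideOf_thirdSide hv) hs
  have ht := hccw.eq_mk hv.2.1
  rcases hUD with ⟨hU, hD⟩ | ⟨hU, hD⟩
  · refine ⟨ρ, hρ, hL.slack_eq_zero hflow (hU ▸ hT) (hD ▸ hT'.2), 0, ?_⟩
    simp only [negContrib, Matrix.cons_val_zero, hU, hd]
    exact congrArg _ ht.symm
  · refine ⟨ρ, hρ, hL.slack_eq_zero hflow (hU ▸ hT'.2) (hD ▸ hT), 1, ?_⟩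
    simp only [negContrib, Matrix.cons_val_one, hD, hd]
    exact congrArg _ ht.symm

lemma delTurnEdge_of_isCWTurn (hflow : IsFlow n f) (hL : IsFlatspace n f L) (hv : t.valid n)
    (hv' : t'.valid n) (hte : TurnEdge t t') (hcw : IsCWTurn t) (hcw' : IsCWTurn t')
    (hT : t.tri ∈ L) (hT' : t'.tri ∈ L) : DelTurnEdge n f t t' := by
  obtain ⟨hd, hne, -⟩ := hte
  obtain ⟨ρ, hρ, hdiag, hUD⟩ := exists_rhombus_of_sideOf hv.1 hv'.1 hne hv.2.2.1 (hd ▸ hv'.2.1)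
  have e₁ : t = ⟨t.tri, cwNext t.tri t.outE, t.outE⟩ := by rw [← hcw]
  have e₂ : t' = ⟨t'.tri, t.outE, cwNext t'.tri (cwNext t'.tri t.outE)⟩ := by
    rw [hd, ← hcw'.outE_eq hv'.2.2.1]
  rcases hUD with ⟨hU, hD⟩ | ⟨hU, hD⟩
  · refine ⟨ρ, hρ, hL.slack_eq_zero hflow (hU ▸ hT) (hD ▸ hT'), 2, ?_⟩
    simp only [negContrib, hU, hD, hdiag]
    exact congrArg₂ _ e₁.symm e₂.symm
  · refine ⟨ρ, hρ, hL.slack_eq_zero hflow (hU ▸ hT') (hD ▸ hT), 3, ?_⟩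
    simp only [negContrib, hU, hD, hdiag]
    exact congrArg₂ _ e₁.symm e₂.symm

end Deletion

section Obstructions

variable {n : ℕ} {lam mu nu : ℕ → ℕ} {f : Flow} {L : Set Tri} {p : List RVertex} {t : Turn}
  (hf : IsHive n f) (hL : IsFlatspace n f L) (hp : IsCompleteTP (ResidAdj n lam mu nu f) p)
include hf hL hp

lemma not_acrossInL_of_isCCWTurn (ht : .turn t ∈ p) (hT : t.tri ∈ L) (hccw : IsCCWTurn t) :
    ¬ acrossInL n L t := fun h =>
  (hp.valid_and_not_delTurn ht).2
    (delTurn_of_acrossInL hf.1 hL (hp.valid_and_not_delTurn ht).1 hT hccw h)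

lemma not_acrossInL_next_of_isCWTurn (ht : .turn t ∈ p) (hcw : IsCWTurn t) (hT : t.tri ∈ L)
    {T' : Tri} (hs : sideOf t.outE T') (hne : T' ≠ t.tri) (hT' : T' ∈ L) :
    ¬ acrossInL n L ⟨T', t.outE, cwNext T' t.outE⟩ := by
  intro hacr
  obtain ⟨t', ⟨⟨hv, hv', hte⟩, -, hdel', hdelE⟩, rfl, hin⟩ :=
    hp.exists_next_turn ht hs hne (hL.valid hT')
  rcases isCCWTurn_or_isCWTurn hv' with hccw' | hcw'
  · refine hdel' (delTurn_of_acrossInL hf.1 hL hv' hT' hccw' ?_)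
    have : t' = ⟨t'.tri, t.outE, cwNext t'.tri t.outE⟩ := by rw [← hin, ← hccw']
    rw [this]
    exact hacr
  · exact hdelE (delTurnEdge_of_isCWTurn hf.1 hL hv hv' hte hcw hcw' hT hT')

lemma not_acrossInL_prev_of_isCWTurn (ht : .turn t ∈ p) (hcw : IsCWTurn t) (hT : t.tri ∈ L)
    {T₀ : Tri} (hs : sideOf t.inE T₀) (hne : T₀ ≠ t.tri) (hT₀ : T₀ ∈ L) :
    ¬ acrossInL n L ⟨T₀, cwNext T₀ (cwNext T₀ t.inE), t.inE⟩ := by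
  intro hacr
  obtain ⟨t₀, ⟨⟨hv₀, hv, hte⟩, hdel₀, -, hdelE⟩, rfl, hout⟩ :=
    hp.exists_prev_turn ht hs hne (hL.valid hT₀)
  rcases isCCWTurn_or_isCWTurn hv₀ with hccw₀ | hcw₀
  · refine hdel₀ (delTurn_of_acrossInL hf.1 hL hv₀ hT₀ hccw₀ ?_)
    have : t₀ = ⟨t₀.tri, cwNext t₀.tri (cwNext t₀.tri t.inE), t.inE⟩ := by
      rw [← hout, hccw₀, cwNext_cwNext_cwNext hv₀.2.1, ← hccw₀]
    rw [this]
    exact hacr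
  · exact hdelE (delTurnEdge_of_isCWTurn hf.1 hL hv₀ hv hte hcw₀ hcw hT₀ hT)

/-- `t.tri`, `T'`, `T''` are consecutive triangles around the common vertex of `t.inE` and `d`,
so `T'` lies in `L` as well.  Turning counterclockwise, `t` would close off `t.tri ∪ T'`;
turning clockwise, `p` would continue into `T'` and there either close off `T' ∪ T''` or turn
clockwise a second time. -/
lemma false_of_entering_fan (ht : .turn t ∈ p) (hT : t.tri ∈ L) {d : EdgeK}
    (hd : cwNext t.tri (cwNext t.tri t.inE) = d) {T' T'' : Tri}
    (hs' : sideOf d T') (hne' : T' ≠ t.tri) (hT'v : T'.valid n)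
    (hs'' : sideOf (cwNext T' (cwNext T' d)) T'') (hne'' : T'' ≠ T') (hT'' : T'' ∈ L) :
    False := by
  obtain ⟨hv, -⟩ := hp.valid_and_not_delTurn ht
  have hT' : T' ∈ L := hL.mem_of_between hf hT hT'' hT'v
    (hd ▸ sideOf_cwNext (sideOf_cwNext hv.2.1)) hs' hs'' (sideOf_cwNext (sideOf_cwNext hs'))
    hne'.symm hne'' (cwNext_cwNext_ne hs').symm
  have hacr : acrossInL n L ⟨T', d, cwNext T' d⟩ :=
    acrossInL_of_sideOf (by rwa [IsCCWTurn.thirdSide_eq (t := ⟨T', d, cwNext T' d⟩) rfl hs']) hne''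
      (hL.inL_of_mem hT'')
  rcases isCCWTurn_or_isCWTurn hv with hccw | hcw
  · refine not_acrossInL_of_isCCWTurn hf hL hp ht hT hccw
      (acrossInL_of_sideOf ?_ hne' (hL.inL_of_mem hT'))
    rwa [hccw.thirdSide_eq hv.2.1, hd]
  · obtain rfl : t.outE = d := (hcw.outE_eq hv.2.2.1).trans hd
    exact not_acrossInL_next_of_isCWTurn hf hL hp ht hcw hT hs' hne' hT' hacr

/-- The mirror image of `false_of_entering_fan`, around the common vertex of `t.outE` and `d`. -/
lemma false_of_exiting_fan (ht : .turn t ∈ p) (hT : t.tri ∈ L) {d : EdgeK}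
    (hd : cwNext t.tri t.outE = d) {T₀ T'' : Tri}
    (hs₀ : sideOf d T₀) (hne₀ : T₀ ≠ t.tri) (hT₀v : T₀.valid n)
    (hs'' : sideOf (cwNext T₀ d) T'') (hne'' : T'' ≠ T₀) (hT'' : T'' ∈ L) : False := by
  obtain ⟨hv, -⟩ := hp.valid_and_not_delTurn ht
  have hT₀ : T₀ ∈ L := hL.mem_of_between hf hT hT'' hT₀v (hd ▸ sideOf_cwNext hv.2.2.1) hs₀ hs''
    (sideOf_cwNext hs₀) hne₀.symm hne'' (cwNext_ne hs₀).symm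
  have hacr : acrossInL n L ⟨T₀, cwNext T₀ (cwNext T₀ d), d⟩ := by
    refine acrossInL_of_sideOf ?_ hne'' (hL.inL_of_mem hT'')
    rwa [IsCCWTurn.thirdSide_eq (t := ⟨T₀, cwNext T₀ (cwNext T₀ d), d⟩)
      (cwNext_cwNext_cwNext hs₀).symm (sideOf_cwNext (sideOf_cwNext hs₀)),
      cwNext_cwNext_cwNext (sideOf_cwNext hs₀)]
  rcases isCCWTurn_or_isCWTurn hv with hccw | hcw
  · refine not_acrossInL_of_isCCWTurn hf hL hp ht hT hccw
      (acrossInL_of_sideOf ?_ hne₀ (hL.inL_of_mem hT₀))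
    rwa [hccw.thirdSide_eq hv.2.1, ← hccw, hd]
  · obtain rfl : t.inE = d := hcw.trans hd
    exact not_acrossInL_prev_of_isCWTurn hf hL hp ht hcw hT hs₀ hne₀ hT₀ hacr

lemma not_innerTri (ht : .turn t ∈ p) (hT : t.tri ∈ L) : ¬ InnerTri n L t.tri := by
  intro hI
  have fan : ∀ (m i : ℕ) (T' T'' : Tri), vertexInTri (m, i) t.tri →
      sideOf (cwNext t.tri (cwNext t.tri t.inE)) T' → T' ≠ t.tri → vertexInTri (m, i) T' →
      sideOf (cwNext T' (cwNext T' (cwNext t.tri (cwNext t.tri t.inE)))) T'' → T'' ≠ T' →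
      vertexInTri (m, i) T'' → False := fun m i _ _ hv hs' hne' hv' hs'' hne'' hv'' =>
    false_of_entering_fan hf hL hp ht hT rfl hs' hne'
      (hL.valid (mem_of_surroundedVertex (hI m i hv) hv')) hs'' hne''
      (mem_of_surroundedVertex (hI m i hv) hv'')
  have hin := (hp.valid_and_not_delTurn ht).1.2.1
  obtain ⟨T, e, o⟩ := t
  rcases T with ⟨m, i⟩ | ⟨m, i⟩
  · rcases sideOf_up_iff.mp hin with rfl | rfl | rfl
    · obtain ⟨hi, hm, -⟩ := hI m i (by simp [vertexInTri])
      obtain ⟨j, rfl⟩ : ∃ j, i = j + 1 := ⟨i - 1, by omega⟩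
      obtain ⟨k, rfl⟩ : ∃ k, m = k + 1 := ⟨m - 1, by omega⟩
      refine fan (k+1) (j+1) (.down (k+1) j) (.up k j) ?_ ?_ ?_ ?_ ?_ ?_ ?_ <;>
        simp [vertexInTri, sideOf_up_iff, sideOf_down_iff]
    · refine fan (m+1) (i+1) (.down m i) (.up m (i+1)) ?_ ?_ ?_ ?_ ?_ ?_ ?_ <;>
        simp [vertexInTri, sideOf_up_iff, sideOf_down_iff]
    · refine fan (m+1) i (.down (m+1) i) (.up (m+1) i) ?_ ?_ ?_ ?_ ?_ ?_ ?_ <;>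
        simp [vertexInTri, sideOf_up_iff, sideOf_down_iff]
  · rcases sideOf_down_iff.mp hin with rfl | rfl | rfl
    · obtain ⟨hi, -⟩ := hI m i (by simp [vertexInTri])
      obtain ⟨j, rfl⟩ : ∃ j, i = j + 1 := ⟨i - 1, by omega⟩
      refine fan m (j+1) (.up m (j+1)) (.down m j) ?_ ?_ ?_ ?_ ?_ ?_ ?_ <;>
        simp [vertexInTri, sideOf_up_iff, sideOf_down_iff]
    · obtain ⟨-, hm, -⟩ := hI m (i+1) (by simp [vertexInTri])
      obtain ⟨k, rfl⟩ : ∃ k, m = k + 1 := ⟨m - 1, by omega⟩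
      refine fan (k+1) (i+1) (.up k i) (.down k i) ?_ ?_ ?_ ?_ ?_ ?_ ?_ <;>
        simp [vertexInTri, sideOf_up_iff, sideOf_down_iff]
    · refine fan (m+1) (i+1) (.up m (i+1)) (.down (m+1) (i+1)) ?_ ?_ ?_ ?_ ?_ ?_ ?_ <;>
        simp [vertexInTri, sideOf_up_iff, sideOf_down_iff]

end Obstructions

section Sides

variable {n : ℕ} {f : Flow} {L : Set Tri} {e : EdgeK} {s : List EdgeK}

@[simp] lemma not_dnIn_dl_zero {m : ℕ} : ¬ dnIn n L (.dl m 0) := by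
  simp [dnIn, dnOf?]

@[simp] lemma dnIn_dl_succ {m i : ℕ} : dnIn n L (.dl m (i + 1)) ↔ inL n L (.down m i) := by
  simp [dnIn, dnOf?]

@[simp] lemma dnIn_dr {m i : ℕ} : dnIn n L (.dr m i) ↔ inL n L (.down m i) := by
  simp [dnIn, dnOf?]

@[simp] lemma dnIn_hz {m i : ℕ} : dnIn n L (.hz m i) ↔ inL n L (.down m i) := by
  simp [dnIn, dnOf?]

lemma dnIn_iff_of_borderEdge (h : BorderEdge n L e) : dnIn n L e ↔ ¬ inL n L (upOf e) := by
  rcases h.2 with h | h <;> tauto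

lemma sideCW_cons {l : List EdgeK} : sideCW n L (e :: l) ↔ sideCW n L [e] := by
  simp [sideCW]

def linePos : EdgeK → ℕ
  | .dl m _ => m
  | .dr m _ => m
  | .hz _ i => i

lemma linePos_lineSucc (e : EdgeK) : linePos (lineSucc e) = linePos e + 1 := by
  cases e <;> rfl

lemma linePos_iterate (k : ℕ) (e : EdgeK) : linePos (lineSucc^[k] e) = linePos e + k := by
  induction k with
  | zero => rfl
  | succ k ih => rw [Function.iterate_succ_apply', linePos_lineSucc, ih, Nat.add_assoc]

lemma linePos_le (h : e.valid n) : linePos e ≤ n := by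
  cases e <;> simp only [EdgeK.valid, linePos] at h ⊢ <;> omega

theorem exists_first_borderEdge {n : ℕ} {L : Set Tri} {e : EdgeK} (h : BorderEdge n L e) :
    ∃ e₀ k, lineSucc^[k] e₀ = e ∧ (∀ j ≤ k, BorderEdge n L (lineSucc^[j] e₀)) ∧
      ∀ y, lineSucc y = e₀ → ¬ BorderEdge n L y := by
  by_cases hy : ∃ y, lineSucc y = e ∧ BorderEdge n L y
  · obtain ⟨y, rfl, hby⟩ := hy
    obtain ⟨e₀, k, rfl, hall, hfirst⟩ := exists_first_borderEdge hby
    refine ⟨e₀, k + 1, Function.iterate_succ_apply' _ _ _, fun j hj => ?_, hfirst⟩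
    rcases Nat.lt_or_eq_of_le hj with hj | rfl
    · exact hall j (by omega)
    · rwa [Function.iterate_succ_apply']
  · refine ⟨e, 0, rfl, fun j hj => ?_, fun y hy' hby => hy ⟨y, hy', hby⟩⟩
    obtain rfl : j = 0 := by omega
    exact h
termination_by linePos e
decreasing_by subst_vars; rw [linePos_lineSucc]; omega

lemma exists_isSide (h : BorderEdge n L e) : ∃ s, IsSide n L s ∧ e ∈ s := by
  classical
  obtain ⟨e₀, k, rfl, hall, hfirst⟩ := exists_first_borderEdge h
  have hex : ∃ K, ¬ BorderEdge n L (lineSucc^[K + 1] e₀) :=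
    ⟨n, fun hb => by have := linePos_le hb.1; rw [linePos_iterate] at this; omega⟩
  have hK : ∀ j ≤ Nat.find hex, BorderEdge n L (lineSucc^[j] e₀) := by
    rintro (_ | j) hj
    · exact hall 0 (Nat.zero_le _)
    · exact not_not.mp (Nat.find_min hex (by omega : j < Nat.find hex))
  have hkK : k ≤ Nat.find hex := by
    by_contra hlt
    exact Nat.find_spec hex (hall _ (by omega))
  refine ⟨(List.range (Nat.find hex + 1)).map (lineSucc^[·] e₀), ⟨by simp, ?_, ?_, ?_, ?_⟩,
    List.mem_map.mpr ⟨k, List.mem_range.mpr (by omega), rfl⟩⟩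
  · simp only [List.mem_map, List.mem_range]
    rintro _ ⟨j, hj, rfl⟩
    exact hK j (by omega)
  · exact (List.isChain_map _).mpr ((List.isChain_range_succ _ _).mpr
      fun j _ => Function.iterate_succ_apply' _ _ _)
  · intro y a ha hy
    simp only [List.head?_map, List.head?_range, Nat.add_one_ne_zero, if_false,
      Option.map_some, Function.iterate_zero, id, Option.some.injEq] at ha
    exact hfirst y (ha ▸ hy)
  · intro a ha
    simp only [List.getLast?_map, List.getLast?_range, Nat.add_one_ne_zero, if_false,
      Option.map_some, Nat.add_sub_cancel, Option.some.injEq] at ha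
    rw [← ha, ← Function.iterate_succ_apply' lineSucc]
    exact Nat.find_spec hex

/-- Opposite triangles at the common vertex of two consecutive border edges on a line cannot
both lie in `L`: flatness would spread `L` across one of the two edges. -/
lemma not_dnIn_lineSucc_of_inL_upOf (hf : IsHive n f) (hL : IsFlatspace n f L)
    (h : BorderEdge n L e) (h' : BorderEdge n L (lineSucc e)) (hU : inL n L (upOf e)) :
    ¬ dnIn n L (lineSucc e) := by
  intro hD
  have hd' := dnIn_iff_of_borderEdge h'
  have hv := h.1
  rcases e with ⟨m, _ | i⟩ | ⟨m, i⟩ | ⟨_ | m, i⟩ <;>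
    simp only [lineSucc, upOf, not_dnIn_dl_zero, dnIn_dl_succ, dnIn_dr, dnIn_hz, EdgeK.valid,
      Nat.add_sub_cancel] at hU hD hd' hv <;> try omega
  all_goals
    have hg := hL.triThroughputs_eq hf.1 hU.2 hD.2
    obtain ⟨⟨_, _⟩, _, _⟩ := And.intro hU.1 hD.1
    simp only [triThroughputs, Prod.mk.injEq] at hg
  · have hρ' := hf.2 (.drD (m+1) (i+1)) ⟨by omega, by omega⟩
    refine hd'.mp hD ⟨⟨by omega, by omega⟩, (hL.mem_rhombus_of_slack_nonpos hf
      (ρ := .dlD (m+1) i) ⟨by omega, by omega⟩ (.inr hD.2) ?_).1⟩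
    simp only [slack] at hρ' ⊢; linarith
  · have hρ' := hf.2 (.dlD (m+1) i) ⟨by omega, by omega⟩
    refine hd'.mp hD ⟨⟨by omega, by omega⟩, (hL.mem_rhombus_of_slack_nonpos hf
      (ρ := .drD (m+1) (i+1)) ⟨by omega, by omega⟩ (.inr hD.2) ?_).1⟩
    simp only [slack] at hρ' ⊢; linarith
  · have := hf.1.1 m i (by omega) (by omega)
    have := hf.1.2 m i (by omega) (by omega)
    have hρ' := hf.2 (.dlD m i) ⟨by omega, by omega⟩
    refine hd'.mp hD ⟨⟨by omega, by omega⟩, (hL.mem_rhombus_of_slack_nonpos hf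
      (ρ := .hzD m (i+1)) ⟨by omega, by omega⟩ (.inr hD.2) ?_).1⟩
    simp only [slack] at hρ' ⊢; linarith

lemma not_inL_upOf_lineSucc_of_dnIn (hf : IsHive n f) (hL : IsFlatspace n f L)
    (h : BorderEdge n L e) (h' : BorderEdge n L (lineSucc e)) (hD : dnIn n L e) :
    ¬ inL n L (upOf (lineSucc e)) := by
  intro hU
  have hd := dnIn_iff_of_borderEdge h
  have hd' := dnIn_iff_of_borderEdge h'
  have hv := h.1
  rcases e with ⟨m, _ | i⟩ | ⟨m, i⟩ | ⟨_ | m, i⟩ <;>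
    simp only [lineSucc, upOf, not_dnIn_dl_zero, dnIn_dl_succ, dnIn_dr, dnIn_hz, EdgeK.valid,
      Nat.add_sub_cancel] at hU hD hd hd' hv <;> try omega
  all_goals
    have hg := hL.triThroughputs_eq hf.1 hU.2 hD.2
    obtain ⟨⟨_, _⟩, _, _⟩ := And.intro hU.1 hD.1
    simp only [triThroughputs, Prod.mk.injEq] at hg
    have := hf.1.1 (m+1) (i+1) (by omega) (by omega)
    have := hf.1.2 (m+1) (i+1) (by omega) (by omega)
  · have hρ' := hf.2 (.hzD m (i+1)) ⟨by omega, by omega⟩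
    refine hd.mp hD ⟨⟨by omega, by omega⟩, (hL.mem_rhombus_of_slack_nonpos hf
      (ρ := .dlD m i) ⟨by omega, by omega⟩ (.inr hD.2) ?_).1⟩
    simp only [slack] at hρ' ⊢; linarith
  · have hρ' := hf.2 (.hzD m (i+1)) ⟨by omega, by omega⟩
    refine hd'.mp ⟨⟨by omega, by omega⟩, (hL.mem_rhombus_of_slack_nonpos hf
      (ρ := .drD (m+1) (i+1)) ⟨by omega, by omega⟩ (.inl hU.2) ?_).2⟩ hU
    simp only [slack] at hρ' ⊢; linarith
  · have hρ' := hf.2 (.drD (m+1) (i+1)) ⟨by omega, by omega⟩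
    refine hd'.mp ⟨⟨by omega, by omega⟩, (hL.mem_rhombus_of_slack_nonpos hf
      (ρ := .hzD m (i+1)) ⟨by omega, by omega⟩ (.inl hU.2) ?_).2⟩ hU
    simp only [slack] at hρ' ⊢; linarith

lemma dnIn_lineSucc_iff (hf : IsHive n f) (hL : IsFlatspace n f L) (h : BorderEdge n L e)
    (h' : BorderEdge n L (lineSucc e)) : dnIn n L (lineSucc e) ↔ dnIn n L e :=
  ⟨fun hD => (dnIn_iff_of_borderEdge h).mpr
      fun hU => not_dnIn_lineSucc_of_inL_upOf hf hL h h' hU hD,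
    fun hD => (dnIn_iff_of_borderEdge h').mpr (not_inL_upOf_lineSucc_of_dnIn hf hL h h' hD)⟩

lemma inL_upOf_lineSucc_iff (hf : IsHive n f) (hL : IsFlatspace n f L) (h : BorderEdge n L e)
    (h' : BorderEdge n L (lineSucc e)) : inL n L (upOf (lineSucc e)) ↔ inL n L (upOf e) := by
  rw [← not_iff_not, ← dnIn_iff_of_borderEdge h, ← dnIn_iff_of_borderEdge h']
  exact dnIn_lineSucc_iff hf hL h h'

lemma sideCW_lineSucc_iff (hf : IsHive n f) (hL : IsFlatspace n f L) (h : BorderEdge n L e)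
    (h' : BorderEdge n L (lineSucc e)) : sideCW n L [lineSucc e] ↔ sideCW n L [e] := by
  rcases e with ⟨m, i⟩ | ⟨m, i⟩ | ⟨m, i⟩ <;>
    simp only [sideCW, List.head?_cons, Option.some.injEq, exists_eq_left', lineSucc]
  · exact dnIn_lineSucc_iff hf hL h h'
  · exact inL_upOf_lineSucc_iff hf hL h h'
  · exact dnIn_lineSucc_iff hf hL h h'

lemma IsSide.sideCW_iff (hf : IsHive n f) (hL : IsFlatspace n f L) (hs : IsSide n L s)
    (he : e ∈ s) : sideCW n L s ↔ sideCW n L [e] := by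
  obtain ⟨hne, hb, hc, -⟩ := hs
  obtain ⟨a, l, rfl⟩ := List.exists_cons_of_ne_nil hne
  rw [sideCW_cons]
  have hc' : (a :: l).IsChain (fun x y => y = lineSucc x ∧ BorderEdge n L x ∧ BorderEdge n L y) :=
    List.IsChain.imp_of_mem_imp (fun x y hx hy hxy => ⟨hxy, hb x hx, hb y hy⟩) hc
  refine (hc'.induction (fun x => sideCW n L [x] ↔ sideCW n L [a]) _ ?_ (fun _ => Iff.rfl)
    e he).symm
  rintro x _ ⟨rfl, hx, hy⟩ hxa
  exact (sideCW_lineSucc_iff hf hL hx hy).trans hxa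

lemma IsSide.entranceOf_of_mem (hf : IsHive n f) (hL : IsFlatspace n f L) (hs : IsSide n L s)
    (he : e ∈ s) (hprev : sideCW n L [e] → ∀ y, lineSucc y = e → ¬ BorderEdge n L y)
    (hnext : ¬ sideCW n L [e] → ¬ BorderEdge n L (lineSucc e)) : entranceOf n L s e := by
  by_cases hcw : sideCW n L [e]
  · refine .inl ⟨(hs.sideCW_iff hf hL he).mpr hcw, ?_⟩
    refine (head?_eq_or_exists_rel_of_mem hs.2.2.1 he).resolve_right ?_
    rintro ⟨y, hy, rfl⟩
    exact hprev hcw y rfl (hs.2.1 y hy)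
  · refine .inr ⟨mt (hs.sideCW_iff hf hL he).mp hcw, ?_⟩
    refine (getLast?_eq_or_exists_rel_of_mem hs.2.2.1 he).resolve_right ?_
    rintro ⟨y, hy, rfl⟩
    exact hnext hcw (hs.2.1 _ hy)

lemma IsSide.exitOf_of_mem (hf : IsHive n f) (hL : IsFlatspace n f L) (hs : IsSide n L s)
    (he : e ∈ s) (hnext : sideCW n L [e] → ¬ BorderEdge n L (lineSucc e))
    (hprev : ¬ sideCW n L [e] → ∀ y, lineSucc y = e → ¬ BorderEdge n L y) : exitOf n L s e := by
  by_cases hcw : sideCW n L [e]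
  · refine .inl ⟨(hs.sideCW_iff hf hL he).mpr hcw, ?_⟩
    refine (getLast?_eq_or_exists_rel_of_mem hs.2.2.1 he).resolve_right ?_
    rintro ⟨y, hy, rfl⟩
    exact hnext hcw (hs.2.1 _ hy)
  · refine .inr ⟨mt (hs.sideCW_iff hf hL he).mp hcw, ?_⟩
    refine (head?_eq_or_exists_rel_of_mem hs.2.2.1 he).resolve_right ?_
    rintro ⟨y, hy, rfl⟩
    exact hprev hcw y rfl (hs.2.1 y hy)

end Sides

section Entrances

variable {n : ℕ} {lam mu nu : ℕ → ℕ} {f : Flow} {L : Set Tri} {p : List RVertex} {t : Turn}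
  {y : EdgeK} (hf : IsHive n f) (hL : IsFlatspace n f L)
  (hp : IsCompleteTP (ResidAdj n lam mu nu f) p)
include hf hL hp

/-- If `L` lies clockwise of `t.inE`, the edge before `t.inE` on its line meets it at the common
vertex of `t.inE` and `cwNext t.tri (cwNext t.tri t.inE)`.  Were it a border edge, `L` would lie
on the same side of it (`inL_upOf_lineSucc_iff`), which puts the two triangles following `t.tri`
around that vertex into `L`, against `false_of_entering_fan`.  The next three lemmas run the same
argument for the other orientation and for exits. -/
lemma not_borderEdge_of_lineSucc_eq_inE (ht : .turn t ∈ p) (hT : inL n L t.tri)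
    (hbe : BorderEdge n L t.inE) (hcw : sideCW n L [t.inE]) (hy : lineSucc y = t.inE) :
    ¬ BorderEdge n L y := by
  intro hb
  have hin := (hp.valid_and_not_delTurn ht).1.2.1
  have hd := dnIn_iff_of_borderEdge hbe
  obtain ⟨T, e, o⟩ := t
  rcases T with ⟨m, i⟩ | ⟨m, i⟩
  · rcases sideOf_up_iff.mp hin with rfl | rfl | rfl
    · rcases y with ⟨a, b⟩ | ⟨a, b⟩ | ⟨a, b⟩ <;> simp only [lineSucc, reduceCtorEq, dr.injEq] at hy
      obtain ⟨rfl, rfl⟩ := hy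
      have hT'' : inL n L (.up a b) := (inL_upOf_lineSucc_iff hf hL hb hbe).mp hT
      obtain ⟨⟨_, _⟩, _, _⟩ := And.intro hT.1 hT''.1
      exact false_of_entering_fan hf hL hp ht hT.2 rfl (T' := .down (a+1) b) (T'' := .up a b)
        (by simp [sideOf_down_iff]) (by simp) ⟨by omega, by omega⟩ (by simp [sideOf_up_iff])
        (by simp) hT''.2
    · exact hd.mp (by simpa [sideCW] using hcw) hT
    · exact hd.mp (by simpa [sideCW] using hcw) hT
  · rcases sideOf_down_iff.mp hin with rfl | rfl | rfl
    · rcases y with ⟨a, b⟩ | ⟨a, b⟩ | ⟨a, b⟩ <;> simp only [lineSucc, reduceCtorEq, hz.injEq] at hy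
      obtain ⟨rfl, rfl⟩ := hy
      have hT'' : inL n L (.down a b) :=
        dnIn_hz.mp ((dnIn_lineSucc_iff hf hL hb hbe).mp (dnIn_hz.mpr hT))
      obtain ⟨⟨_, _⟩, _, _⟩ := And.intro hT.1 hT''.1
      exact false_of_entering_fan hf hL hp ht hT.2 rfl (T' := .up a (b+1)) (T'' := .down a b)
        (by simp [sideOf_up_iff]) (by simp) ⟨by omega, by omega⟩ (by simp [sideOf_down_iff])
        (by simp) hT''.2
    · rcases y with ⟨a, b⟩ | ⟨a, b⟩ | ⟨a, b⟩ <;> simp only [lineSucc, reduceCtorEq, dl.injEq] at hy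
      obtain ⟨rfl, rfl⟩ := hy
      have hT'' : inL n L (.down a i) :=
        dnIn_dl_succ.mp ((dnIn_lineSucc_iff hf hL hb hbe).mp (dnIn_dl_succ.mpr hT))
      obtain ⟨⟨_, _⟩, _, _⟩ := And.intro hT.1 hT''.1
      exact false_of_entering_fan hf hL hp ht hT.2 rfl (T' := .up a i) (T'' := .down a i)
        (by simp [sideOf_up_iff]) (by simp) ⟨by omega, by omega⟩ (by simp [sideOf_down_iff])
        (by simp) hT''.2
    · exact hd.mp (dnIn_dr.mpr hT) (by simpa [sideCW] using hcw)

lemma not_borderEdge_lineSucc_inE (ht : .turn t ∈ p) (hT : inL n L t.tri)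
    (hbe : BorderEdge n L t.inE) (hcw : ¬ sideCW n L [t.inE]) :
    ¬ BorderEdge n L (lineSucc t.inE) := by
  intro hb
  have hin := (hp.valid_and_not_delTurn ht).1.2.1
  obtain ⟨T, e, o⟩ := t
  rcases T with ⟨m, i⟩ | ⟨m, i⟩
  · rcases sideOf_up_iff.mp hin with rfl | rfl | rfl
    · exact hcw (by simpa [sideCW, upOf] using hT)
    · have hT'' : inL n L (.up m (i+1)) := (inL_upOf_lineSucc_iff hf hL hbe hb).mpr hT
      obtain ⟨⟨_, _⟩, _, _⟩ := And.intro hT.1 hT''.1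
      exact false_of_entering_fan hf hL hp ht hT.2 rfl (T' := .down m i) (T'' := .up m (i+1))
        (by simp [sideOf_down_iff]) (by simp) ⟨by omega, by omega⟩ (by simp [sideOf_up_iff])
        (by simp) hT''.2
    · have hT'' : inL n L (.up (m+1) i) := (inL_upOf_lineSucc_iff hf hL hbe hb).mpr hT
      obtain ⟨⟨_, _⟩, _, _⟩ := And.intro hT.1 hT''.1
      exact false_of_entering_fan hf hL hp ht hT.2 rfl (T' := .down (m+1) i) (T'' := .up (m+1) i)
        (by simp [sideOf_down_iff]) (by simp) ⟨by omega, by omega⟩ (by simp [sideOf_up_iff])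
        (by simp) hT''.2
  · rcases sideOf_down_iff.mp hin with rfl | rfl | rfl
    · exact hcw (by simpa [sideCW] using hT)
    · exact hcw (by simpa [sideCW] using hT)
    · have hT'' : inL n L (.down (m+1) (i+1)) :=
        dnIn_dr.mp ((dnIn_lineSucc_iff hf hL hbe hb).mpr (dnIn_dr.mpr hT))
      obtain ⟨⟨_, _⟩, _, _⟩ := And.intro hT.1 hT''.1
      exact false_of_entering_fan hf hL hp ht hT.2 rfl (T' := .up m (i+1))
        (T'' := .down (m+1) (i+1)) (by simp [sideOf_up_iff]) (by simp) ⟨by omega, by omega⟩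
        (by simp [sideOf_down_iff]) (by simp) hT''.2

lemma not_borderEdge_lineSucc_outE (ht : .turn t ∈ p) (hT : inL n L t.tri)
    (hbe : BorderEdge n L t.outE) (hcw : sideCW n L [t.outE]) :
    ¬ BorderEdge n L (lineSucc t.outE) := by
  intro hb
  have hout := (hp.valid_and_not_delTurn ht).1.2.2.1
  have hd := dnIn_iff_of_borderEdge hbe
  obtain ⟨T, e, o⟩ := t
  rcases T with ⟨m, i⟩ | ⟨m, i⟩
  · rcases sideOf_up_iff.mp hout with rfl | rfl | rfl
    · have hT'' : inL n L (.up (m+1) (i+1)) := (inL_upOf_lineSucc_iff hf hL hbe hb).mpr hT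
      obtain ⟨⟨_, _⟩, _, _⟩ := And.intro hT.1 hT''.1
      exact false_of_exiting_fan hf hL hp ht hT.2 rfl (T₀ := .down (m+1) i)
        (T'' := .up (m+1) (i+1)) (by simp [sideOf_down_iff]) (by simp) ⟨by omega, by omega⟩
        (by simp [sideOf_up_iff]) (by simp) hT''.2
    · exact hd.mp (by simpa [sideCW] using hcw) hT
    · exact hd.mp (by simpa [sideCW] using hcw) hT
  · rcases sideOf_down_iff.mp hout with rfl | rfl | rfl
    · have hT'' : inL n L (.down m (i+1)) :=
        dnIn_hz.mp ((dnIn_lineSucc_iff hf hL hbe hb).mpr (dnIn_hz.mpr hT))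
      obtain ⟨⟨_, _⟩, _, _⟩ := And.intro hT.1 hT''.1
      exact false_of_exiting_fan hf hL hp ht hT.2 rfl (T₀ := .up m (i+1)) (T'' := .down m (i+1))
        (by simp [sideOf_up_iff]) (by simp) ⟨by omega, by omega⟩ (by simp [sideOf_down_iff])
        (by simp) hT''.2
    · have hT'' : inL n L (.down (m+1) i) :=
        dnIn_dl_succ.mp ((dnIn_lineSucc_iff hf hL hbe hb).mpr (dnIn_dl_succ.mpr hT))
      obtain ⟨⟨_, _⟩, _, _⟩ := And.intro hT.1 hT''.1
      exact false_of_exiting_fan hf hL hp ht hT.2 rfl (T₀ := .up m i) (T'' := .down (m+1) i)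
        (by simp [sideOf_up_iff]) (by simp) ⟨by omega, by omega⟩ (by simp [sideOf_down_iff])
        (by simp) hT''.2
    · exact hd.mp (dnIn_dr.mpr hT) (by simpa [sideCW] using hcw)

lemma not_borderEdge_of_lineSucc_eq_outE (ht : .turn t ∈ p) (hT : inL n L t.tri)
    (hbe : BorderEdge n L t.outE) (hcw : ¬ sideCW n L [t.outE]) (hy : lineSucc y = t.outE) :
    ¬ BorderEdge n L y := by
  intro hb
  have hout := (hp.valid_and_not_delTurn ht).1.2.2.1
  obtain ⟨T, e, o⟩ := t
  rcases T with ⟨m, i⟩ | ⟨m, i⟩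
  · rcases sideOf_up_iff.mp hout with rfl | rfl | rfl
    · exact hcw (by simpa [sideCW, upOf] using hT)
    · rcases y with ⟨a, b⟩ | ⟨a, b⟩ | ⟨a, b⟩ <;> simp only [lineSucc, reduceCtorEq, hz.injEq] at hy
      obtain ⟨rfl, rfl⟩ := hy
      have hT'' : inL n L (.up m b) := (inL_upOf_lineSucc_iff hf hL hb hbe).mp hT
      obtain ⟨⟨_, _⟩, _, _⟩ := And.intro hT.1 hT''.1
      exact false_of_exiting_fan hf hL hp ht hT.2 rfl (T₀ := .down m b) (T'' := .up m b)
        (by simp [sideOf_down_iff]) (by simp) ⟨by omega, by omega⟩ (by simp [sideOf_up_iff])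
        (by simp) hT''.2
    · rcases y with ⟨a, b⟩ | ⟨a, b⟩ | ⟨a, b⟩ <;> simp only [lineSucc, reduceCtorEq, dl.injEq] at hy
      obtain ⟨rfl, rfl⟩ := hy
      have hT'' : inL n L (.up a b) := (inL_upOf_lineSucc_iff hf hL hb hbe).mp hT
      obtain ⟨⟨_, _⟩, _, _⟩ := And.intro hT.1 hT''.1
      exact false_of_exiting_fan hf hL hp ht hT.2 rfl (T₀ := .down (a+1) b) (T'' := .up a b)
        (by simp [sideOf_down_iff]) (by simp) ⟨by omega, by omega⟩ (by simp [sideOf_up_iff])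
        (by simp) hT''.2
  · rcases sideOf_down_iff.mp hout with rfl | rfl | rfl
    · exact hcw (by simpa [sideCW] using hT)
    · exact hcw (by simpa [sideCW] using hT)
    · rcases y with ⟨a, b⟩ | ⟨a, b⟩ | ⟨a, b⟩ <;> simp only [lineSucc, reduceCtorEq, dr.injEq] at hy
      obtain ⟨rfl, rfl⟩ := hy
      have hT'' : inL n L (.down a b) :=
        dnIn_dr.mp ((dnIn_lineSucc_iff hf hL hb hbe).mp (dnIn_dr.mpr hT))
      obtain ⟨⟨_, _⟩, _, _⟩ := And.intro hT.1 hT''.1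
      exact false_of_exiting_fan hf hL hp ht hT.2 rfl (T₀ := .up a (b+1)) (T'' := .down a b)
        (by simp [sideOf_up_iff]) (by simp) ⟨by omega, by omega⟩ (by simp [sideOf_down_iff])
        (by simp) hT''.2

end Entrances

theorem flatspace_traversal_general (n : ℕ) (lam mu nu : ℕ → ℕ)
    (f : Flow) (hf : MemB n lam mu nu f)
    (p : List RVertex) (hp : IsCompleteTP (ResidAdj n lam mu nu f) p)
    (L : Set Tri) (hL : IsFlatspace n f L) :
    ((∀ t : Turn, RVertex.turn t ∈ p → inL n L t.tri → BorderEdge n L t.inE →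
        ∃ s : List EdgeK, IsSide n L s ∧ entranceOf n L s t.inE) ∧
     (∀ t : Turn, RVertex.turn t ∈ p → inL n L t.tri → BorderEdge n L t.outE →
        ∃ s : List EdgeK, IsSide n L s ∧ exitOf n L s t.outE)) ∧
    ((∀ t : Turn, RVertex.turn t ∈ p → inL n L t.tri → ¬ InnerTri n L t.tri) ∧
     (∀ t : Turn, RVertex.turn t ∈ p → inL n L t.tri → IsCCWTurn t → ¬ acrossInL n L t)) := by
  have hhive : IsHive n f := hf.2.1
  refine ⟨⟨fun t ht hT hbe => ?_, fun t ht hT hbe => ?_⟩,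
    fun t ht hT => not_innerTri hhive hL hp ht hT.2,
    fun t ht hT => not_acrossInL_of_isCCWTurn hhive hL hp ht hT.2⟩
  · obtain ⟨s, hs, he⟩ := exists_isSide hbe
    exact ⟨s, hs, hs.entranceOf_of_mem hhive hL he
      (fun hcw _ => not_borderEdge_of_lineSucc_eq_inE hhive hL hp ht hT hbe hcw)
      (not_borderEdge_lineSucc_inE hhive hL hp ht hT hbe)⟩
  · obtain ⟨s, hs, he⟩ := exists_isSide hbe
    exact ⟨s, hs, hs.exitOf_of_mem hhive hL he
      (not_borderEdge_lineSucc_outE hhive hL hp ht hT hbe)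
      (fun hcw _ => not_borderEdge_of_lineSucc_eq_outE hhive hL hp ht hT hbe hcw)⟩

/-- Let `p` be a complete turnpath in `R_f` and `L` an `f`-flatspace.  Then
(1) `p` enters `L` only by crossing entrance edges of sides of `L` and leaves
`L` only by crossing exit edges of sides of `L`; and
(2) inside `L`, `p` uses only turnvertices in border triangles of `L` and
traverses the border of `L` in counterclockwise direction (every
counterclockwise turn of `p` in `L` closes off a rhombus leaving `L`). -/
theorem flatspace_traversal (n : ℕ) (hn : 1 ≤ n) (lam mu nu : ℕ → ℕ)
    (hpart : PartitionData n lam mu nu)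
    (f : Flow) (hf : MemB n lam mu nu f)
    (p : List RVertex) (hp : IsCompleteTP (ResidAdj n lam mu nu f) p)
    (L : Set Tri) (hL : IsFlatspace n f L) :
    ((∀ t : Turn, RVertex.turn t ∈ p → inL n L t.tri → BorderEdge n L t.inE →
        ∃ s : List EdgeK, IsSide n L s ∧ entranceOf n L s t.inE) ∧
     (∀ t : Turn, RVertex.turn t ∈ p → inL n L t.tri → BorderEdge n L t.outE →
        ∃ s : List EdgeK, IsSide n L s ∧ exitOf n L s t.outE)) ∧
    ((∀ t : Turn, RVertex.turn t ∈ p → inL n L t.tri → ¬ InnerTri n L t.tri) ∧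
     (∀ t : Turn, RVertex.turn t ∈ p → inL n L t.tri → IsCCWTurn t → ¬ acrossInL n L t)) :=
  flatspace_traversal_general n lam mu nu f hf p hp L hL

end LRFlows
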